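/- arXiv:2411.15884 — 7 statements merged into one kernel-verified Lean document; each statement's English description precedes it below -/
import Mathlib

section
/- Suppose (A,B) is a near-factorization of a finite abelian group (G,+). Then there exists an element g ∈ G such that (A+g, B−g) is a symmetric near-factorization of G. -/
open Pointwise

/-- `(A,B)` is a near-factorization of the finite additive group `G`:
`|A|·|B| = |G| - 1` and `A + B = G \ {0}`. -/
def IsAddNearFactorization {G : Type*} [AddGroup G] [Fintype G] [DecidableEq G]
    (A B : Finset G) : Prop :=
  A.card * B.card = Fintype.card G - 1 ∧ A + B = Finset.univ \ {0}

/-- A subset `X` of an additive group is symmetric if `X = -X`. -/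
def IsSymmetricSet {G : Type*} [AddGroup G] [DecidableEq G] (X : Finset G) : Prop :=
  X = -X

namespace NearFactAux

open Finset

variable {G : Type*} [AddCommGroup G] [Fintype G] [DecidableEq G]

/-- Number of representations of `y` as `a + b` with `a ∈ A`, `b ∈ B`. -/
def cnt (A B : Finset G) (y : G) : ℕ := ((A ×ˢ B).filter fun p => p.1 + p.2 = y).card

lemma cnt_comm (A B : Finset G) (y : G) : cnt A B y = cnt B A y := by
  refine Finset.card_bij' (fun p _ => (p.2, p.1)) (fun p _ => (p.2, p.1)) ?_ ?_ ?_ ?_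
  · rintro ⟨a, b⟩ hp
    simp only [mem_filter, mem_product] at hp ⊢
    exact ⟨⟨hp.1.2, hp.1.1⟩, by rw [add_comm]; exact hp.2⟩
  · rintro ⟨a, b⟩ hp
    simp only [mem_filter, mem_product] at hp ⊢
    exact ⟨⟨hp.1.2, hp.1.1⟩, by rw [add_comm]; exact hp.2⟩
  · rintro ⟨a, b⟩ _; rfl
  · rintro ⟨a, b⟩ _; rfl

lemma sum_cnt (A B : Finset G) : ∑ y, cnt A B y = A.card * B.card := by
  rw [← Finset.card_product]
  exact (Finset.card_eq_sum_card_fiberwise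
    (f := fun p : G × G => p.1 + p.2) (t := univ) (fun p _ => mem_univ _)).symm

lemma fubini (X Y Z : Finset G) (w : G) :
    ∑ x ∈ X, cnt Y Z (w - x) = ∑ z ∈ Z, cnt X Y (w - z) := by
  have hiff : ∀ x y z : G, (y + z = w - x) ↔ (x + y + z = w) := by
    intro x y z
    rw [eq_sub_iff_add_eq]
    constructor <;> intro h <;> rw [← h] <;> abel
  have hiff2 : ∀ z x y : G, (x + y = w - z) ↔ (x + y + z = w) := by
    intro z x y
    rw [eq_sub_iff_add_eq]
  calc ∑ x ∈ X, cnt Y Z (w - x)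
      = ∑ x ∈ X, ∑ y ∈ Y, ∑ z ∈ Z, if x + y + z = w then 1 else 0 := by
        refine sum_congr rfl fun x _ => ?_
        rw [cnt, card_filter, sum_product]
        refine sum_congr rfl fun y _ => sum_congr rfl fun z _ => ?_
        simp only [hiff]
    _ = ∑ x ∈ X, ∑ z ∈ Z, ∑ y ∈ Y, if x + y + z = w then 1 else 0 :=
        sum_congr rfl fun x _ => Finset.sum_comm
    _ = ∑ z ∈ Z, ∑ x ∈ X, ∑ y ∈ Y, if x + y + z = w then 1 else 0 :=
        Finset.sum_comm
    _ = ∑ z ∈ Z, cnt X Y (w - z) := by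
        refine sum_congr rfl fun z _ => ?_
        rw [cnt, card_filter, sum_product]
        refine sum_congr rfl fun x _ => sum_congr rfl fun y _ => ?_
        simp only [hiff2]

lemma sum_ind (X : Finset G) (w : G) :
    (∑ x ∈ X, if w - x = 0 then 0 else 1) + (if w ∈ X then 1 else 0) = X.card := by
  have h1 : ∀ x ∈ X, (if w - x = 0 then (0 : ℕ) else 1) = if w = x then 0 else 1 :=
    fun x _ => if_congr sub_eq_zero rfl rfl
  rw [Finset.sum_congr rfl h1, Finset.sum_ite, Finset.sum_const, Finset.sum_const,
    smul_eq_mul, smul_eq_mul, mul_zero, mul_one, zero_add]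
  have h3 := Finset.card_filter_add_card_filter_not (s := X) (p := fun x => w = x)
  have h4 : (X.filter fun x => w = x).card = if w ∈ X then 1 else 0 := by
    have h5 : (X.filter fun x => w = x) = if w ∈ X then {w} else ∅ := Finset.filter_eq X w
    rw [h5]
    split_ifs <;> simp
  omega

/-- Main counting lemma: a near-factorization satisfies `-A - h = A` for some `h`. -/
lemma exists_shift (A B : Finset G) (hcard : A.card * B.card = Fintype.card G - 1)
    (hsum : A + B = Finset.univ \ {0}) (hn : 1 < Fintype.card G) :
    ∃ h : G, A.image (fun a => -a - h) = A := by
  have hmem : ∀ y : G, y ∈ A + B ↔ y ≠ 0 := by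
    intro y; rw [hsum]; simp
  have h0 : ∀ a ∈ A, ∀ b ∈ B, a + b ≠ 0 :=
    fun a ha b hb => (hmem _).mp (add_mem_add ha hb)
  have hcnt0 : cnt A B 0 = 0 := by
    rw [cnt, Finset.card_eq_zero, Finset.filter_eq_empty_iff]
    rintro ⟨a, b⟩ hp
    rw [mem_product] at hp
    exact h0 a hp.1 b hp.2
  have hcnt1 : ∀ y : G, y ≠ 0 → 1 ≤ cnt A B y := by
    intro y hy
    obtain ⟨a, ha, b, hb, hab⟩ := Finset.mem_add.mp ((hmem y).mpr hy)
    exact Finset.card_pos.mpr ⟨(a, b), by simp [mem_filter, mem_product, ha, hb, hab]⟩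
  have hsumcnt : ∑ y, cnt A B y = Fintype.card G - 1 := by rw [sum_cnt, hcard]
  have hcnt : ∀ y : G, cnt A B y = if y = 0 then 0 else 1 := by
    by_contra hc
    push_neg at hc
    obtain ⟨y0, hy0⟩ := hc
    have hy0ne : y0 ≠ 0 := by
      rintro rfl; rw [hcnt0] at hy0; simp at hy0
    rw [if_neg hy0ne] at hy0
    have h2 : 1 < cnt A B y0 := lt_of_le_of_ne (hcnt1 y0 hy0ne) (Ne.symm hy0)
    have e1 : ∑ y ∈ (univ.erase (0 : G)), cnt A B y = Fintype.card G - 1 := by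
      rw [Finset.sum_erase _ hcnt0]; exact hsumcnt
    have hcard' : (univ.erase (0 : G)).card = Fintype.card G - 1 := by
      rw [card_erase_of_mem (mem_univ _), card_univ]
    have hlt : ∑ _y ∈ univ.erase (0 : G), 1 < ∑ y ∈ univ.erase (0 : G), cnt A B y := by
      refine Finset.sum_lt_sum (fun i hi => hcnt1 i (mem_erase.mp hi).1) ?_
      exact ⟨y0, mem_erase.mpr ⟨hy0ne, mem_univ _⟩, h2⟩
    rw [e1, Finset.sum_const, smul_eq_mul, mul_one, hcard'] at hlt
    exact lt_irrefl _ hlt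
  have huniq : ∀ a ∈ A, ∀ b ∈ B, ∀ a' ∈ A, ∀ b' ∈ B, a + b = a' + b' → a = a' ∧ b = b' := by
    intro a ha b hb a' ha' b' hb' he
    have hy : a + b ≠ 0 := h0 a ha b hb
    have h1 : cnt A B (a + b) = 1 := by rw [hcnt]; simp [hy]
    have := Finset.card_le_one.mp (le_of_eq h1) (a, b)
      (by simp [mem_filter, mem_product, ha, hb]) (a', b')
      (by simp [mem_filter, mem_product, ha', hb', he.symm])
    exact ⟨congrArg Prod.fst this, congrArg Prod.snd this⟩
  -- the difference counting function
  set q : G → ℕ := fun g => ((A ×ˢ B).filter fun p => p.2 - p.1 = g).card with hqdef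
  have hqle : ∀ g, q g ≤ 1 := by
    intro g
    refine Finset.card_le_one.mpr ?_
    rintro ⟨a, b⟩ h1 ⟨a', b'⟩ h2
    rw [mem_filter, mem_product] at h1 h2
    have hee : b - a = b' - a' := h1.2.trans h2.2.symm
    have he : a' + b = a + b' := by
      have h5 := sub_eq_sub_iff_add_eq_add.mp hee
      rw [add_comm a' b, h5, add_comm b' a]
    obtain ⟨h3, h4⟩ := huniq a' h2.1.1 b h1.1.2 a h1.1.1 b' h2.1.2 he
    exact Prod.ext h3.symm h4
  have hsumq : ∑ g, q g = Fintype.card G - 1 := by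
    have hfib := Finset.card_eq_sum_card_fiberwise
      (f := fun p : G × G => p.2 - p.1) (s := A ×ˢ B) (t := univ) (fun p _ => mem_univ _)
    rw [Finset.card_product, hcard] at hfib
    exact hfib.symm
  have hZ : (univ.filter fun g => q g = 0).card = 1 := by
    have hsplit := Finset.sum_filter_add_sum_filter_not univ (fun g => q g = 0) q
    have h1 : ∑ g ∈ univ.filter (fun g => q g = 0), q g = 0 :=
      Finset.sum_eq_zero fun g hg => (mem_filter.mp hg).2
    have h2 : ∑ g ∈ univ.filter (fun g => ¬q g = 0), q g
        = (univ.filter (fun g => ¬q g = 0)).card := by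
      rw [Finset.card_eq_sum_ones]
      refine Finset.sum_congr rfl fun g hg => ?_
      have := (mem_filter.mp hg).2
      have := hqle g
      omega
    have h3 := Finset.card_filter_add_card_filter_not (s := univ)
      (p := fun g => q g = 0)
    rw [card_univ] at h3
    omega
  obtain ⟨g₀, hg₀⟩ := Finset.card_eq_one.mp hZ
  have hqg₀ : q g₀ = 0 := by
    have h5 : g₀ ∈ univ.filter fun g => q g = 0 := hg₀ ▸ mem_singleton_self g₀
    exact (mem_filter.mp h5).2
  have hq1 : ∀ g, g ≠ g₀ → q g = 1 := by
    intro g hg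
    have h5 : g ∉ univ.filter fun g => q g = 0 := by rw [hg₀]; simp [hg]
    have h6 : ¬q g = 0 := fun h => h5 (mem_filter.mpr ⟨mem_univ _, h⟩)
    have := hqle g
    omega
  set A' := A.image (fun a => -a - g₀) with hA'def
  have hcntA' : ∀ y : G, cnt A' B y = q (y + g₀) := by
    intro y
    refine Finset.card_bij' (fun p _ => (-p.1 - g₀, p.2)) (fun p _ => (-p.1 - g₀, p.2))
      ?_ ?_ ?_ ?_
    · rintro ⟨a', b⟩ hp
      simp only [mem_filter, mem_product] at hp
      obtain ⟨⟨ha', hb⟩, hs⟩ := hp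
      rw [hA'def, mem_image] at ha'
      obtain ⟨a, ha, hae⟩ := ha'
      simp only [mem_filter, mem_product]
      have h7 : -a' - g₀ = a := by rw [← hae]; abel
      refine ⟨⟨by rw [h7]; exact ha, hb⟩, ?_⟩
      have h8 : b - (-a' - g₀) = (a' + b) + g₀ := by abel
      rw [h8, hs]
    · rintro ⟨a, b⟩ hp
      simp only [mem_filter, mem_product] at hp
      obtain ⟨⟨ha, hb⟩, hs⟩ := hp
      simp only [mem_filter, mem_product]
      refine ⟨⟨by rw [hA'def]; exact mem_image_of_mem _ ha, hb⟩, ?_⟩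
      have h8 : -a - g₀ + b = (b - a) - g₀ := by abel
      rw [h8, hs]
      abel
    · rintro ⟨a, b⟩ _
      simp only [Prod.mk.injEq]
      exact ⟨by abel, trivial⟩
    · rintro ⟨a, b⟩ _
      simp only [Prod.mk.injEq]
      exact ⟨by abel, trivial⟩
  have hcntA'' : ∀ y : G, cnt A' B y = if y = 0 then 0 else 1 := by
    intro y
    rw [hcntA']
    by_cases hy : y = 0
    · rw [if_pos hy, hy, zero_add]; exact hqg₀
    · rw [if_neg hy]
      refine hq1 _ fun hcontra => hy ?_
      have := add_right_cancel (b := g₀) (a := y) (c := 0)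
      exact this (by rw [zero_add]; exact hcontra)
  have hcntBA : ∀ y : G, cnt B A y = if y = 0 then 0 else 1 :=
    fun y => (cnt_comm B A y).trans (hcnt y)
  have hcardA' : A'.card = A.card :=
    Finset.card_image_of_injective _ fun x y h => neg_inj.mp (sub_left_inj.mp h)
  have key : ∀ w : G, (if w ∈ A' then (1 : ℕ) else 0) = if w ∈ A then 1 else 0 := by
    intro w
    have hf := fubini A' B A w
    have e1 : ∑ x ∈ A', cnt B A (w - x) = ∑ x ∈ A', if w - x = 0 then 0 else 1 :=
      sum_congr rfl fun x _ => by rw [hcntBA]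
    have e2 : ∑ z ∈ A, cnt A' B (w - z) = ∑ z ∈ A, if w - z = 0 then 0 else 1 :=
      sum_congr rfl fun z _ => by rw [hcntA'']
    have s1 := sum_ind A' w
    have s2 := sum_ind A w
    omega
  refine ⟨g₀, ?_⟩
  rw [← hA'def]
  ext w
  have h9 := key w
  by_cases h1 : w ∈ A' <;> by_cases h2 : w ∈ A <;>
    simp [h1, h2] at h9 ⊢ <;> tauto

end NearFactAux

/-- Every near-factorization `(A,B)` of a finite abelian group has a translate
`(A+g, B-g)` which is a symmetric near-factorization. -/
theorem stmt2 {G : Type*} [AddCommGroup G] [Fintype G] [DecidableEq G]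
    (A B : Finset G) (hAB : IsAddNearFactorization A B) :
    ∃ g : G, IsAddNearFactorization (A.image (· + g)) (B.image (· - g)) ∧
      IsSymmetricSet (A.image (· + g)) ∧ IsSymmetricSet (B.image (· - g)) := by
  classical
  obtain ⟨hcard, hsum⟩ := hAB
  rcases le_or_gt (Fintype.card G) 1 with hn | hn
  · -- trivial group
    have hsub : Subsingleton G := Fintype.card_le_one_iff_subsingleton.mp hn
    have hz : ∀ x : G, x = 0 := fun x => Subsingleton.elim x 0
    have hsymm : ∀ X : Finset G, IsSymmetricSet X := by
      intro X
      ext x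
      rw [Finset.mem_neg]
      constructor
      · intro hx; exact ⟨x, hx, by rw [hz x, neg_zero]⟩
      · rintro ⟨y, hy, rfl⟩; rwa [hz y, neg_zero, ← hz y]
    have hA : A.image (· + (0 : G)) = A := by simp
    have hB : B.image (· - (0 : G)) = B := by simp
    exact ⟨0, by rw [hA, hB]; exact ⟨hcard, hsum⟩, by rw [hA]; exact hsymm A,
      by rw [hB]; exact hsymm B⟩
  · have hmem : ∀ y : G, y ∈ A + B ↔ y ≠ 0 := by
      intro y; rw [hsum]; simp
    obtain ⟨g₀, hA'⟩ := NearFactAux.exists_shift A B hcard hsum hn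
    obtain ⟨g₁, hB'⟩ := NearFactAux.exists_shift B A
      (by rw [mul_comm]; exact hcard) (by rw [add_comm]; exact hsum) hn
    have hg01 : g₀ + g₁ = 0 := by
      by_contra hne
      have hne' : -(g₀ + g₁) ≠ 0 := fun h => hne (neg_eq_zero.mp h)
      obtain ⟨a, ha, b, hb, hab⟩ := Finset.mem_add.mp ((hmem _).mpr hne')
      have ha' : a ∈ A.image (fun a => -a - g₀) := by rw [hA']; exact ha
      have hb' : b ∈ B.image (fun b => -b - g₁) := by rw [hB']; exact hb
      obtain ⟨a1, ha1, hae⟩ := Finset.mem_image.mp ha'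
      obtain ⟨b1, hb1, hbe⟩ := Finset.mem_image.mp hb'
      have h2 : a1 + b1 = -((-a1 - g₀) + (-b1 - g₁) + (g₀ + g₁)) := by abel
      rw [hae, hbe, hab] at h2
      have h3 : a1 + b1 = 0 := by rw [h2]; abel
      exact (hmem (a1 + b1)).mp (Finset.add_mem_add ha1 hb1) h3
    -- sum of elements of A
    set s : G := ∑ a ∈ A, a with hsdef
    have hinj : ∀ x ∈ A, ∀ y ∈ A, -x - g₀ = -y - g₀ → x = y :=
      fun x _ y _ h => neg_inj.mp (sub_left_inj.mp h)
    have hsmul : A.card • g₀ = -s - s := by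
      have him : ∑ x ∈ A.image (fun a => -a - g₀), x = ∑ a ∈ A, (-a - g₀) :=
        Finset.sum_image hinj
      rw [hA'] at him
      have hrhs : ∑ a ∈ A, (-a - g₀) = -s - A.card • g₀ := by
        rw [Finset.sum_sub_distrib, Finset.sum_neg_distrib, Finset.sum_const, hsdef]
      rw [hrhs] at him
      -- him : s = -s - A.card • g₀
      have h6 := congrArg (fun x => x + A.card • g₀ - s - s) him
      rw [eq_sub_iff_add_eq] at him
      rw [← him]; abel
    have hdvd : A.card ∣ Fintype.card G - 1 := ⟨B.card, hcard.symm⟩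
    have hcop : Nat.Coprime A.card (Fintype.card G) := by
      have h1 : Nat.gcd A.card (Fintype.card G) ∣ Fintype.card G - 1 :=
        dvd_trans (Nat.gcd_dvd_left _ _) hdvd
      have h2 : Nat.gcd A.card (Fintype.card G) ∣ Fintype.card G :=
        Nat.gcd_dvd_right _ _
      have h3 : Nat.gcd A.card (Fintype.card G) ∣ 1 := by
        have := Nat.dvd_sub h2 h1
        rwa [show Fintype.card G - (Fintype.card G - 1) = 1 by omega] at this
      exact Nat.dvd_one.mp h3
    obtain ⟨u, v, huv⟩ := Nat.isCoprime_iff_coprime.mpr hcop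
    set g : G := (-u) • s with hgdef
    have hg0eq : g₀ = g + g := by
      have horder : (Fintype.card G : ℤ) • g₀ = 0 := by
        rw [natCast_zsmul]; exact card_nsmul_eq_zero
      have hsmulz : (A.card : ℤ) • g₀ = -s - s := by
        rw [natCast_zsmul]; exact hsmul
      calc g₀ = (1 : ℤ) • g₀ := (one_zsmul g₀).symm
        _ = (u * A.card + v * Fintype.card G) • g₀ := by rw [huv]
        _ = (u * A.card) • g₀ + (v * Fintype.card G) • g₀ := add_zsmul _ _ _
        _ = u • ((A.card : ℤ) • g₀) + v • ((Fintype.card G : ℤ) • g₀) := by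
            rw [mul_zsmul, mul_zsmul]
        _ = u • (-s - s) + v • (0 : G) := by rw [hsmulz, horder]
        _ = u • (-s) - u • s := by rw [smul_zero, add_zero, smul_sub]
        _ = (-u) • s + (-u) • s := by rw [smul_neg, neg_zsmul]; abel
        _ = g + g := by rw [hgdef]
    have hg1eq : g₁ = -(g + g) := by
      rw [← hg0eq]
      have := congrArg (fun x => x - g₀) hg01
      simpa using this
    have hAmem : ∀ a ∈ A, -a - g₀ ∈ A := by
      intro a ha
      rw [← hA']
      exact Finset.mem_image_of_mem _ ha
    have hBmem : ∀ b ∈ B, -b - g₁ ∈ B := by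
      intro b hb
      rw [← hB']
      exact Finset.mem_image_of_mem _ hb
    refine ⟨g, ⟨?_, ?_⟩, ?_, ?_⟩
    · -- cardinality
      rw [Finset.card_image_of_injective _ (add_left_injective g),
        Finset.card_image_of_injective _ fun x y h => by rwa [sub_left_inj] at h]
      exact hcard
    · -- sumset
      have himg : A.image (· + g) + B.image (· - g) = A + B := by
        ext x
        simp only [Finset.mem_add, Finset.mem_image]
        constructor
        · rintro ⟨y, ⟨a, ha, rfl⟩, z, ⟨b, hb, rfl⟩, rfl⟩
          exact ⟨a, ha, b, hb, by abel⟩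
        · rintro ⟨a, ha, b, hb, rfl⟩
          exact ⟨a + g, ⟨a, ha, rfl⟩, b - g, ⟨b, hb, rfl⟩, by abel⟩
      rw [himg, hsum]
    · -- symmetry of A + g
      ext x
      simp only [Finset.mem_neg, Finset.mem_image]
      constructor
      · rintro ⟨a, ha, rfl⟩
        exact ⟨-(a + g), ⟨-a - g₀, hAmem a ha, by rw [hg0eq]; abel⟩, by rw [neg_neg]⟩
      · rintro ⟨y, ⟨a, ha, rfl⟩, rfl⟩
        exact ⟨-a - g₀, hAmem a ha, by rw [hg0eq]; abel⟩
    · -- symmetry of B - g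
      ext x
      simp only [Finset.mem_neg, Finset.mem_image]
      constructor
      · rintro ⟨b, hb, rfl⟩
        exact ⟨-(b - g), ⟨-b - g₁, hBmem b hb, by rw [hg1eq]; abel⟩, by rw [neg_neg]⟩
      · rintro ⟨y, ⟨b, hb, rfl⟩, rfl⟩
        exact ⟨-b - g₁, hBmem b hb, by rw [hg1eq]; abel⟩
end

section
/- If (A,B) is a (k,ℓ)-near-factorization of the dihedral group D_n, then either (i) the number of rotations in A is (k−1)/2 and the number of rotations in B is (ℓ+1)/2, or (ii) the number of rotations in A is (k+1)/2 and the number of rotations in B is (ℓ−1)/2. -/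
open Pointwise

/-- `isRot x` holds iff `x` is a rotation `b^j = r j` of the dihedral group. -/
def isRot {n : ℕ} : DihedralGroup n → Bool
  | DihedralGroup.r _ => true
  | DihedralGroup.sr _ => false

/-- The number of rotations in a subset of the dihedral group. -/
def rotCount {n : ℕ} (A : Finset (DihedralGroup n)) : ℕ :=
  (A.filter (fun x => isRot x = true)).card

lemma isRot_mul {n : ℕ} (a b : DihedralGroup n) :
    (isRot (a * b) = true) ↔ (isRot a = isRot b) := by
  cases a <;> cases b <;>
    simp [isRot, DihedralGroup.r_mul_r, DihedralGroup.r_mul_sr,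
      DihedralGroup.sr_mul_r, DihedralGroup.sr_mul_sr]

/-- If `(A,B)` is a `(k,ℓ)`-near-factorization of `D_n`, then the numbers of
rotations in `A` and `B` are respectively `(k-1)/2` and `(ℓ+1)/2`, or
`(k+1)/2` and `(ℓ-1)/2`. -/
theorem stmt4 {n : ℕ} [NeZero n] (hn : 2 < n) (k ℓ : ℕ)
    (A B : Finset (DihedralGroup n))
    (hAcard : A.card = k) (hBcard : B.card = ℓ)
    (hprod : k * ℓ = 2 * n - 1)
    (hNF : A * B = Finset.univ \ {1}) :
    (2 * rotCount A = k - 1 ∧ 2 * rotCount B = ℓ + 1) ∨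
    (2 * rotCount A = k + 1 ∧ 2 * rotCount B = ℓ - 1) := by
  classical
  set α := rotCount A with hα
  set β := rotCount B with hβ
  have hαdef : α = (A.filter (fun x => isRot x = true)).card := rfl
  have hβdef : β = (B.filter (fun x => isRot x = true)).card := rfl
  have hαk : α ≤ k := hAcard ▸ Finset.card_filter_le _ _
  have hβℓ : β ≤ ℓ := hBcard ▸ Finset.card_filter_le _ _
  -- cardinality of A * B
  have hcardAB : (A * B).card = 2 * n - 1 := by
    rw [hNF, Finset.card_sdiff_of_subset (by simp), Finset.card_univ, DihedralGroup.card,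
      Finset.card_singleton]
  -- injectivity of the multiplication map on A ×ˢ B
  have hinj : Set.InjOn (fun p : DihedralGroup n × DihedralGroup n => p.1 * p.2)
      (A ×ˢ B : Finset _) := by
    rw [← Finset.card_image_iff]
    rw [Finset.image_mul_product, hcardAB, Finset.card_product, hAcard, hBcard, hprod]
  -- rotations in the universe
  have huniv : (Finset.univ.filter (fun x : DihedralGroup n => isRot x = true)).card = n := by
    have h1 : Finset.univ.filter (fun x : DihedralGroup n => isRot x = true)
        = Finset.univ.image DihedralGroup.r := by
      ext x; rw [Finset.mem_filter]; cases x <;> simp [isRot]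
    rw [h1, Finset.card_image_of_injective _ (fun a b h => by injection h),
      Finset.card_univ, ZMod.card]
  -- rotations in univ \ {1} : n - 1
  have hrotNF : ((A * B).filter (fun x => isRot x = true)).card = n - 1 := by
    have h1 : (A * B).filter (fun x => isRot x = true)
        = (Finset.univ.filter (fun x : DihedralGroup n => isRot x = true)).erase 1 := by
      rw [hNF]
      ext x
      simp only [Finset.mem_filter, Finset.mem_sdiff, Finset.mem_univ, true_and,
        Finset.mem_singleton, Finset.mem_erase]
    rw [h1, Finset.card_erase_of_mem (by rw [Finset.mem_filter]; exact ⟨Finset.mem_univ _, rfl⟩), huniv]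
  -- count pairs producing rotations
  have hpairs : ((A ×ˢ B).filter (fun p => isRot (p.1 * p.2) = true)).card
      = α * β + (k - α) * (ℓ - β) := by
    have hsplit : (A ×ˢ B).filter (fun p => isRot (p.1 * p.2) = true)
        = ((A ×ˢ B).filter (fun p => isRot p.1 = true ∧ isRot p.2 = true)) ∪
          ((A ×ˢ B).filter (fun p => isRot p.1 = false ∧ isRot p.2 = false)) := by
      rw [← Finset.filter_or]
      apply Finset.filter_congr
      intro p _
      rw [isRot_mul]
      cases h1 : isRot p.1 <;> cases h2 : isRot p.2 <;> simp
    rw [hsplit, Finset.card_union_of_disjoint,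
      Finset.filter_product (fun x : DihedralGroup n => isRot x = true)
        (fun x : DihedralGroup n => isRot x = true),
      Finset.filter_product (fun x : DihedralGroup n => isRot x = false)
        (fun x : DihedralGroup n => isRot x = false),
      Finset.card_product, Finset.card_product]
    · have hA' : (A.filter fun x => isRot x = false).card = k - α := by
        have := Finset.card_filter_add_card_filter_not
          (s := A) (p := fun x => isRot x = true)
        simp only [Bool.not_eq_true] at this
        omega
      have hB' : (B.filter fun x => isRot x = false).card = ℓ - β := by
        have := Finset.card_filter_add_card_filter_not
          (s := B) (p := fun x => isRot x = true)
        simp only [Bool.not_eq_true] at this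
        omega
      rw [hA', hB', ← hαdef, ← hβdef]
    · rw [Finset.disjoint_left]
      intro p hp hq
      simp only [Finset.mem_filter] at hp hq
      rcases hp with ⟨-, h1, -⟩
      rcases hq with ⟨-, h2, -⟩
      simp [h1] at h2
  -- transfer the pair count to the product set
  have hkey : α * β + (k - α) * (ℓ - β) = n - 1 := by
    rw [← hpairs, ← hrotNF, ← Finset.image_mul_product, Finset.filter_image]
    exact (Finset.card_image_of_injOn (hinj.mono (Finset.filter_subset _ _))).symm
  -- now integer arithmetic
  have hk1 : 1 ≤ k := by
    rcases Nat.eq_zero_or_pos k with h | h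
    · rw [h, zero_mul] at hprod; omega
    · exact h
  have hℓ1 : 1 ≤ ℓ := by
    rcases Nat.eq_zero_or_pos ℓ with h | h
    · rw [h, mul_zero] at hprod; omega
    · exact h
  have hkeyZ : ((α : ℤ) * β + ((k : ℤ) - α) * ((ℓ : ℤ) - β) = (n : ℤ) - 1) := by
    have h := congrArg (Nat.cast : ℕ → ℤ) hkey
    push_cast [hαk, hβℓ, show 1 ≤ n by omega] at h
    linarith
  have hprodZ : (k : ℤ) * ℓ = 2 * (n : ℤ) - 1 := by
    have h := congrArg (Nat.cast : ℕ → ℤ) hprod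
    push_cast [show 1 ≤ 2 * n by omega] at h
    linarith
  have hmul : (2 * (α : ℤ) - k) * (2 * (β : ℤ) - ℓ) = -1 := by
    linear_combination 2 * hkeyZ - hprodZ
  have hu : IsUnit (2 * (α : ℤ) - k) :=
    IsUnit.of_mul_eq_one (-(2 * (β : ℤ) - ℓ)) (by linear_combination -hmul)
  rcases Int.isUnit_iff.mp hu with h | h
  · rw [h, one_mul] at hmul
    right
    constructor <;> omega
  · rw [h] at hmul
    have hy : 2 * (β : ℤ) - ℓ = 1 := by linarith
    left
    constructor <;> omega
end

section
/- Let k ≥ 2, n = 2^(2k−1), α = 2^k − 1, a₀ = 2^(k−1) − 1, and b₀ = 2^(k−1). Define A = {b, b², …, b^{a₀}} ∪ {ab, ab², …, ab^{a₀}} ∪ {a} and B = {b^α, b^{2α}, …, b^{b₀α}} ∪ {ab^α, ab^{2α}, …, ab^{b₀α}} ∪ {e} (exponents of b taken modulo n). Then (A,B) is a (2^k − 1, 2^k + 1)-near-factorization of the dihedral group D_n. -/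
open Pointwise

/-- The de Caen et al. construction: with `n = 2^(2k-1)`, `α = 2^k - 1`,
`a₀ = 2^(k-1) - 1`, `b₀ = 2^(k-1)`,
`A = {b,…,b^{a₀}} ∪ {ab,…,ab^{a₀}} ∪ {a}` and
`B = {b^α,…,b^{b₀α}} ∪ {ab^α,…,ab^{b₀α}} ∪ {e}`
form a `(2^k - 1, 2^k + 1)`-near-factorization of `D_n`. -/
theorem stmt5 (k n : ℕ) (hk : 2 ≤ k) (hn : n = 2 ^ (2 * k - 1)) [NeZero n]
    (A B : Finset (DihedralGroup n))
    (hA : A = ((Finset.Icc 1 (2 ^ (k - 1) - 1)).image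
                  fun t : ℕ => DihedralGroup.r (t : ZMod n)) ∪
              ((Finset.Icc 1 (2 ^ (k - 1) - 1)).image
                  fun t : ℕ => DihedralGroup.sr (t : ZMod n)) ∪
              {DihedralGroup.sr 0})
    (hB : B = ((Finset.Icc 1 (2 ^ (k - 1))).image
                  fun t : ℕ => DihedralGroup.r ((t * (2 ^ k - 1) : ℕ) : ZMod n)) ∪
              ((Finset.Icc 1 (2 ^ (k - 1))).image
                  fun t : ℕ => DihedralGroup.sr ((t * (2 ^ k - 1) : ℕ) : ZMod n)) ∪
              {1}) :
    A.card = 2 ^ k - 1 ∧ B.card = 2 ^ k + 1 ∧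
      A.card * B.card = 2 * n - 1 ∧ A * B = Finset.univ \ {1} := by
  set m := 2 ^ (k - 1) with hm_def
  have hm : 2 ≤ m := by
    have h1 : 1 ≤ k - 1 := by omega
    calc 2 = 2 ^ 1 := rfl
      _ ≤ 2 ^ (k - 1) := Nat.pow_le_pow_right (by norm_num) h1
  have h2k : 2 ^ k = 2 * m := by
    rw [hm_def, ← pow_succ']
    congr 1
    omega
  have hn2 : n = 2 * (m * m) := by
    rw [hn, hm_def, ← pow_add, ← pow_succ']
    congr 1
    omega
  have hmm : m ≤ m * m := Nat.le_mul_of_pos_left m (by omega)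
  have hkey : m * (2 * m - 1) + m = 2 * (m * m) := by
    zify [show (1:ℕ) ≤ 2 * m from by omega]
    ring
  rw [h2k] at hB
  have hcast : ∀ a b : ℕ, a < n → b < n → ((a : ZMod n) = (b : ZMod n)) → a = b := by
    intro a b ha hb h
    have := congrArg ZMod.val h
    rwa [ZMod.val_cast_of_lt ha, ZMod.val_cast_of_lt hb] at this
  -- membership lemmas
  have memA_r : ∀ t : ℕ, 1 ≤ t → t ≤ m - 1 → DihedralGroup.r (t : ZMod n) ∈ A := by
    intro t h1 h2
    rw [hA]
    exact Finset.mem_union_left _ (Finset.mem_union_left _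
      (Finset.mem_image.2 ⟨t, Finset.mem_Icc.2 ⟨h1, h2⟩, rfl⟩))
  have memA_sr : ∀ t : ℕ, t ≤ m - 1 → DihedralGroup.sr (t : ZMod n) ∈ A := by
    intro t h2
    rcases Nat.eq_zero_or_pos t with h1 | h1
    · subst h1
      rw [hA]
      exact Finset.mem_union_right _ (by simp)
    · rw [hA]
      exact Finset.mem_union_left _ (Finset.mem_union_right _
        (Finset.mem_image.2 ⟨t, Finset.mem_Icc.2 ⟨h1, h2⟩, rfl⟩))
  have memB_r : ∀ t : ℕ, 1 ≤ t → t ≤ m →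
      DihedralGroup.r ((t * (2 * m - 1) : ℕ) : ZMod n) ∈ B := by
    intro t h1 h2
    rw [hB]
    exact Finset.mem_union_left _ (Finset.mem_union_left _
      (Finset.mem_image.2 ⟨t, Finset.mem_Icc.2 ⟨h1, h2⟩, rfl⟩))
  have memB_sr : ∀ t : ℕ, 1 ≤ t → t ≤ m →
      DihedralGroup.sr ((t * (2 * m - 1) : ℕ) : ZMod n) ∈ B := by
    intro t h1 h2
    rw [hB]
    exact Finset.mem_union_left _ (Finset.mem_union_right _
      (Finset.mem_image.2 ⟨t, Finset.mem_Icc.2 ⟨h1, h2⟩, rfl⟩))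
  have memB_one : (1 : DihedralGroup n) ∈ B := by
    rw [hB]
    exact Finset.mem_union_right _ (Finset.mem_singleton_self 1)
  -- cardinalities
  have hIcc1 : (Finset.Icc 1 (m - 1)).card = m - 1 := by rw [Nat.card_Icc]; omega
  have hIcc2 : (Finset.Icc 1 m).card = m := by rw [Nat.card_Icc]; omega
  have cardA : A.card = 2 * m - 1 := by
    have inj_r : Set.InjOn (fun t : ℕ => DihedralGroup.r (t : ZMod n))
        (Finset.Icc 1 (m - 1)) := by
      intro a ha b hb hab
      simp only [Finset.coe_Icc, Set.mem_Icc] at ha hb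
      simp only [DihedralGroup.r.injEq] at hab
      exact hcast a b (by omega) (by omega) hab
    have inj_sr : Set.InjOn (fun t : ℕ => DihedralGroup.sr (t : ZMod n))
        (Finset.Icc 1 (m - 1)) := by
      intro a ha b hb hab
      simp only [Finset.coe_Icc, Set.mem_Icc] at ha hb
      simp only [DihedralGroup.sr.injEq] at hab
      exact hcast a b (by omega) (by omega) hab
    have d12 : Disjoint ((Finset.Icc 1 (m - 1)).image
        (fun t : ℕ => DihedralGroup.r (t : ZMod n)))
        ((Finset.Icc 1 (m - 1)).image (fun t : ℕ => DihedralGroup.sr (t : ZMod n))) := by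
      rw [Finset.disjoint_left]
      intro g h1 h2
      obtain ⟨a, _, rfl⟩ := Finset.mem_image.1 h1
      simp [Finset.mem_image] at h2
    have d3 : DihedralGroup.sr 0 ∉ ((Finset.Icc 1 (m - 1)).image
        (fun t : ℕ => DihedralGroup.r (t : ZMod n))) ∪
        ((Finset.Icc 1 (m - 1)).image (fun t : ℕ => DihedralGroup.sr (t : ZMod n))) := by
      intro h
      rcases Finset.mem_union.1 h with h | h
      · simp [Finset.mem_image] at h
      · obtain ⟨a, ha, ha2⟩ := Finset.mem_image.1 h
        simp only [DihedralGroup.sr.injEq] at ha2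
        rw [Finset.mem_Icc] at ha
        have : a = 0 := hcast a 0 (by omega) (by omega) (by rw [ha2]; simp)
        omega
    rw [hA, Finset.card_union_of_disjoint (Finset.disjoint_singleton_right.2 d3),
      Finset.card_union_of_disjoint d12, Finset.card_image_of_injOn inj_r,
      Finset.card_image_of_injOn inj_sr, hIcc1, Finset.card_singleton]
    omega
  have cardB : B.card = 2 * m + 1 := by
    have hbound : ∀ a : ℕ, a ≤ m → a * (2 * m - 1) < n := by
      intro a ha
      have := Nat.mul_le_mul_right (2 * m - 1) ha
      omega
    have inj_r : Set.InjOn (fun t : ℕ => DihedralGroup.r ((t * (2 * m - 1) : ℕ) : ZMod n))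
        (Finset.Icc 1 m) := by
      intro a ha b hb hab
      simp only [Finset.coe_Icc, Set.mem_Icc] at ha hb
      simp only [DihedralGroup.r.injEq] at hab
      have := hcast _ _ (hbound a ha.2) (hbound b hb.2) hab
      exact Nat.eq_of_mul_eq_mul_right (by omega) this
    have inj_sr : Set.InjOn (fun t : ℕ => DihedralGroup.sr ((t * (2 * m - 1) : ℕ) : ZMod n))
        (Finset.Icc 1 m) := by
      intro a ha b hb hab
      simp only [Finset.coe_Icc, Set.mem_Icc] at ha hb
      simp only [DihedralGroup.sr.injEq] at hab
      have := hcast _ _ (hbound a ha.2) (hbound b hb.2) hab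
      exact Nat.eq_of_mul_eq_mul_right (by omega) this
    have d12 : Disjoint ((Finset.Icc 1 m).image
        (fun t : ℕ => DihedralGroup.r ((t * (2 * m - 1) : ℕ) : ZMod n)))
        ((Finset.Icc 1 m).image
        (fun t : ℕ => DihedralGroup.sr ((t * (2 * m - 1) : ℕ) : ZMod n))) := by
      rw [Finset.disjoint_left]
      intro g h1 h2
      obtain ⟨a, _, rfl⟩ := Finset.mem_image.1 h1
      simp [Finset.mem_image] at h2
    have d3 : (1 : DihedralGroup n) ∉ ((Finset.Icc 1 m).image
        (fun t : ℕ => DihedralGroup.r ((t * (2 * m - 1) : ℕ) : ZMod n))) ∪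
        ((Finset.Icc 1 m).image
        (fun t : ℕ => DihedralGroup.sr ((t * (2 * m - 1) : ℕ) : ZMod n))) := by
      intro h
      rcases Finset.mem_union.1 h with h | h
      · obtain ⟨a, ha, ha2⟩ := Finset.mem_image.1 h
        rw [Finset.mem_Icc] at ha
        rw [DihedralGroup.one_def] at ha2
        simp only [DihedralGroup.r.injEq] at ha2
        have h1 := Nat.mul_le_mul_right (2 * m - 1) ha.1
        have : a * (2 * m - 1) = 0 :=
          hcast _ 0 (hbound a ha.2) (by omega) (by rw [ha2]; simp)
        omega
      · obtain ⟨a, ha, ha2⟩ := Finset.mem_image.1 h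
        rw [DihedralGroup.one_def] at ha2
        cases ha2
    rw [hB, Finset.card_union_of_disjoint (Finset.disjoint_singleton_right.2 d3),
      Finset.card_union_of_disjoint d12, Finset.card_image_of_injOn inj_r,
      Finset.card_image_of_injOn inj_sr, hIcc2, Finset.card_singleton]
    omega
  have cardprod : A.card * B.card = 2 * n - 1 := by
    rw [cardA, cardB, hn2]
    zify [show (1:ℕ) ≤ 2 * m from by omega,
      show (1:ℕ) ≤ 2 * (2 * (m * m)) from by omega]
    ring
  refine ⟨by rw [cardA, h2k], by rw [cardB, h2k], cardprod, ?_⟩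
  -- the main covering claim
  have hsub : Finset.univ \ {(1 : DihedralGroup n)} ⊆ A * B := by
    intro g hg
    have hg1 : g ≠ 1 := by
      simp only [Finset.mem_sdiff, Finset.mem_singleton] at hg
      exact hg.2
    rcases g with x | x
    · -- rotations
      have hx0 : x ≠ 0 := fun h => hg1 (by rw [h, ← DihedralGroup.one_def])
      have hy1 : 1 ≤ x.val := Nat.pos_of_ne_zero fun h => hx0 ((ZMod.val_eq_zero x).1 h)
      have hy2 : x.val < n := ZMod.val_lt x
      have hxv : x = ((x.val : ℕ) : ZMod n) := by rw [ZMod.natCast_val, ZMod.cast_id]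
      set y := x.val with hy
      rw [hxv]
      by_cases hc1 : y ≤ m - 1
      · have h := Finset.mul_mem_mul (memA_r y hy1 hc1) memB_one
        rwa [mul_one] at h
      · by_cases hc2 : m * (2 * m - 1) + 1 ≤ y
        · have h := Finset.mul_mem_mul
            (memA_r (y - m * (2 * m - 1)) (by omega) (by omega))
            (memB_r m (by omega) le_rfl)
          rw [DihedralGroup.r_mul_r, ← Nat.cast_add,
            show y - m * (2 * m - 1) + m * (2 * m - 1) = y from by omega] at h
          exact h
        · obtain ⟨q, s0, hdm', hs0⟩ :
              ∃ q s0, q * (2 * m - 1) + s0 + 1 = y ∧ s0 < 2 * m - 1 := by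
            refine ⟨(y - 1) / (2 * m - 1), (y - 1) % (2 * m - 1), ?_,
              Nat.mod_lt _ (by omega)⟩
            have h := Nat.div_add_mod (y - 1) (2 * m - 1)
            rw [Nat.mul_comm] at h
            omega
          have hqlt : q < m := by
            by_contra hq
            have := Nat.mul_le_mul_right (2 * m - 1) (show m ≤ q by omega)
            omega
          by_cases hs : s0 + 1 ≤ m - 1
          · have hq1 : 1 ≤ q := by
              by_contra h
              have hq0 : q = 0 := by omega
              rw [hq0] at hdm'
              omega
            have h := Finset.mul_mem_mul (memA_r (s0 + 1) (by omega) hs)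
              (memB_r q hq1 (by omega))
            rw [DihedralGroup.r_mul_r, ← Nat.cast_add,
              show s0 + 1 + q * (2 * m - 1) = y from by omega] at h
            exact h
          · have hsucc : (q + 1) * (2 * m - 1) = q * (2 * m - 1) + (2 * m - 1) := by ring
            have h := Finset.mul_mem_mul (memA_sr (2 * m - 2 - s0) (by omega))
              (memB_sr (q + 1) (by omega) (by omega))
            rw [DihedralGroup.sr_mul_sr, ← Nat.cast_sub (by omega),
              show (q + 1) * (2 * m - 1) - (2 * m - 2 - s0) = y from by omega] at h
            exact h
    · -- reflections
      have hy2 : x.val < n := ZMod.val_lt x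
      have hxv : x = ((x.val : ℕ) : ZMod n) := by rw [ZMod.natCast_val, ZMod.cast_id]
      set y := x.val with hy
      rw [hxv]
      by_cases hc1 : y ≤ m - 1
      · have h := Finset.mul_mem_mul (memA_sr y hc1) memB_one
        rwa [mul_one] at h
      · obtain ⟨q, s0, hdm', hs0⟩ :
            ∃ q s0, q * (2 * m - 1) + s0 = y ∧ s0 < 2 * m - 1 := by
          refine ⟨y / (2 * m - 1), y % (2 * m - 1), ?_, Nat.mod_lt _ (by omega)⟩
          have h := Nat.div_add_mod y (2 * m - 1)
          rw [Nat.mul_comm] at h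
          omega
        by_cases hs : s0 ≤ m - 1
        · have hq1 : 1 ≤ q := by
            by_contra h
            have hq0 : q = 0 := by omega
            rw [hq0] at hdm'
            omega
          have hqm : q ≤ m := by
            by_contra h
            have := Nat.mul_le_mul_right (2 * m - 1) (show m + 1 ≤ q by omega)
            have h2 : (m + 1) * (2 * m - 1) = m * (2 * m - 1) + (2 * m - 1) := by ring
            omega
          have h := Finset.mul_mem_mul (memA_sr s0 hs) (memB_r q hq1 hqm)
          rw [DihedralGroup.sr_mul_r, ← Nat.cast_add,
            show s0 + q * (2 * m - 1) = y from by omega] at h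
          exact h
        · have hqlt : q < m := by
            by_contra h
            have := Nat.mul_le_mul_right (2 * m - 1) (show m ≤ q by omega)
            omega
          have hsucc : (q + 1) * (2 * m - 1) = q * (2 * m - 1) + (2 * m - 1) := by ring
          have h := Finset.mul_mem_mul (memA_r (2 * m - 1 - s0) (by omega) (by omega))
            (memB_sr (q + 1) (by omega) (by omega))
          rw [DihedralGroup.r_mul_sr, ← Nat.cast_sub (by omega),
            show (q + 1) * (2 * m - 1) - (2 * m - 1 - s0) = y from by omega] at h
          exact h
  have hcard_univ : (Finset.univ \ {(1 : DihedralGroup n)}).card = 2 * n - 1 := by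
    rw [Finset.card_sdiff_of_subset (Finset.subset_univ _), Finset.card_singleton,
      Finset.card_univ, DihedralGroup.card]
  refine (Finset.eq_of_subset_of_card_le hsub ?_).symm
  rw [hcard_univ]
  calc (A * B).card ≤ A.card * B.card := Finset.card_mul_le
    _ = 2 * n - 1 := cardprod
end

section
/- Let k ≥ 2, n = 2^(2k−1), d₁ = 2^k + 3, d₂ = 2^(k+1) − 3, a₀ = 2^(k−1) − 1, b₀ = 2^(k−1), and s = 2^(k−1) − 3. Define A' = {b^{−s+t·d₁} : 0 ≤ t ≤ a₀−1} ∪ {ab^{−s+t·d₁} : 0 ≤ t ≤ a₀−1} ∪ {a} and B' = {b^{−s+t·d₂} : 1 ≤ t ≤ b₀} ∪ {ab^{−s+t·d₂} : 1 ≤ t ≤ b₀} ∪ {e} (exponents of b taken modulo n). Then (A',B') is a (2^k − 1, 2^k + 1)-near-factorization of the dihedral group D_n. -/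
open Pointwise

namespace NF6

lemma cancelM {M a b : ℤ} (hM : 0 < M) (h : M * a = M * b) : a = b :=
  mul_left_cancel₀ (by omega) h
lemma bound_g {M x g : ℤ} (hM : 0 < M) (h : x = M * g) {lo hi : ℤ}
    (hlo : lo * M < x) (hhi : x < hi * M) : lo < g ∧ g < hi := by
  constructor <;> nlinarith
lemma cancel3 {M x : ℤ} (hc : ∀ y : ℤ, 2 * M ∣ 3 * y → 2 * M ∣ y)
    (hM : 0 < M) (h : M ∣ 3 * x) : M ∣ x := by
  have h2 : 2 * M ∣ 3 * (2 * x) := by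
    obtain ⟨c, hc'⟩ := h
    exact ⟨c, by linarith⟩
  obtain ⟨c, hc'⟩ := hc _ h2
  exact ⟨c, cancelM (by omega : (0:ℤ) < 2) (by linarith)⟩
lemma half_dvd {M y : ℤ} (h : 2 * M ∣ 2 * y) : M ∣ y := by
  obtain ⟨c, hc⟩ := h
  exact ⟨c, cancelM (by omega : (0:ℤ) < 2) (by linarith)⟩
lemma keyL0 {M A B : ℤ} (hM : 0 < M)
    (hc : ∀ y : ℤ, 2 * M ∣ 3 * y → 2 * M ∣ y)
    (hdiv : 2 * M ^ 2 ∣ A * (2 * M + 3) + B * (4 * M - 3))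
    (hb : |A - B| < 2 * M) : A = B ∧ M ∣ A := by
  have h2M : (2 * M) ∣ A * (2 * M + 3) + B * (4 * M - 3) :=
    dvd_trans ⟨M, by ring⟩ hdiv
  have h1 : 2 * M ∣ 3 * (A - B) := by
    obtain ⟨c, hc'⟩ := h2M
    exact ⟨c - (A + 2 * B), by linear_combination hc'⟩
  have hAB : A = B := by
    have := Int.eq_zero_of_abs_lt_dvd (hc _ h1) hb
    omega
  subst hAB
  refine ⟨rfl, cancel3 hc hM ?_⟩
  obtain ⟨c, hc'⟩ := hdiv
  exact ⟨c, cancelM (by omega : 0 < 2 * M) (by linear_combination hc')⟩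
lemma keyLs {M A B : ℤ} (hM : 0 < M)
    (hc : ∀ y : ℤ, 2 * M ∣ 3 * y → 2 * M ∣ y)
    (hdiv : 2 * M ^ 2 ∣ A * (2 * M + 3) + B * (4 * M - 3) + (3 - M)) :
    ∃ g : ℤ, A - B + 1 = M * g ∧ g % 2 = 1 ∧
      2 * M ∣ 2 * (A + 2 * B) + 3 * g - 1 := by
  have hMd : M ∣ A * (2 * M + 3) + B * (4 * M - 3) + (3 - M) :=
    dvd_trans ⟨2 * M, by ring⟩ hdiv
  have h1 : M ∣ 3 * (A - B + 1) := by
    obtain ⟨c, hc'⟩ := hMd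
    exact ⟨c - (2 * (A + 2 * B) - 1), by linear_combination hc'⟩
  obtain ⟨g, hg⟩ := cancel3 hc hM h1
  obtain ⟨c, hc'⟩ := hdiv
  have h2 : 2 * (A + 2 * B) + 3 * g - 1 = 2 * M * c :=
    cancelM hM (by linear_combination hc' - 3 * hg)
  have hodd : g % 2 = 1 := by
    have h3 : (2:ℤ) ∣ 2 * (A + 2 * B) + 3 * g - 1 := ⟨M * c, by linarith⟩
    omega
  exact ⟨g, hg, hodd, ⟨c, h2⟩⟩
lemma keyL2s {M A B : ℤ} (hM : 0 < M)
    (hc : ∀ y : ℤ, 2 * M ∣ 3 * y → 2 * M ∣ y)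
    (hdiv : 2 * M ^ 2 ∣ A * (2 * M + 3) + B * (4 * M - 3) + (6 - 2 * M)) :
    ∃ h : ℤ, A - B + 2 = 2 * M * h ∧ M ∣ (A + 2 * B + 3 * h - 1) := by
  have h2M : 2 * M ∣ A * (2 * M + 3) + B * (4 * M - 3) + (6 - 2 * M) :=
    dvd_trans ⟨M, by ring⟩ hdiv
  have h1 : 2 * M ∣ 3 * (A - B + 2) := by
    obtain ⟨c, hc'⟩ := h2M
    exact ⟨c - (A + 2 * B - 1), by linear_combination hc'⟩
  obtain ⟨h, hh⟩ := hc _ h1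
  obtain ⟨c, hc'⟩ := hdiv
  refine ⟨h, hh, ⟨c, ?_⟩⟩
  exact cancelM (by omega : 0 < 2 * M) (by linear_combination hc' - 3 * hh)

/-- C = 0, both coordinates small: equality. -/
lemma shape0 {M A B : ℤ} (hM : 2 ≤ M)
    (hc : ∀ y : ℤ, 2 * M ∣ 3 * y → 2 * M ∣ y)
    (hA1 : -(M - 2) ≤ A) (hA2 : A ≤ M - 2)
    (hB1 : -(M - 1) ≤ B) (hB2 : B ≤ M - 1)
    (hdiv : 2 * M ^ 2 ∣ A * (2 * M + 3) + B * (4 * M - 3)) :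
    A = 0 ∧ B = 0 := by
  obtain ⟨hAB, hMA⟩ := keyL0 (by omega) hc hdiv (by rw [abs_lt]; omega)
  obtain ⟨w, hw⟩ := hMA
  have hw0 : w = 0 := by
    have := bound_g (by omega : (0:ℤ) < M) hw
      (by omega : (-1) * M < A) (by omega : A < 1 * M)
    omega
  subst hw0
  simp only [mul_zero] at hw
  omega

/-- C = 0, A ≥ 0 "plus", B ≤ -1 or similar disjoint signs: contradiction. -/
lemma shape0' {M A B : ℤ} (hM : 2 ≤ M)
    (hc : ∀ y : ℤ, 2 * M ∣ 3 * y → 2 * M ∣ y)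
    (hne : A ≠ B) (hb1 : -(2*M) < A - B) (hb2 : A - B < 2*M)
    (hdiv : 2 * M ^ 2 ∣ A * (2 * M + 3) + B * (4 * M - 3)) : False := by
  obtain ⟨hAB, -⟩ := keyL0 (by omega) hc hdiv (by rw [abs_lt]; omega)
  exact hne hAB

/-- C = 3 - M, A ∈ [-(M-2), M-2], B ∈ [1, M]. -/
lemma shape6 {M A B : ℤ} (hM : 2 ≤ M)
    (hc : ∀ y : ℤ, 2 * M ∣ 3 * y → 2 * M ∣ y)
    (hA1 : -(M - 2) ≤ A) (hA2 : A ≤ M - 2) (hB1 : 1 ≤ B) (hB2 : B ≤ M)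
    (hdiv : 2 * M ^ 2 ∣ A * (2 * M + 3) + B * (4 * M - 3) + (3 - M)) :
    False := by
  obtain ⟨g, hg, hodd, hdvd⟩ := keyLs (by omega) hc hdiv
  have hgb := bound_g (by omega : (0:ℤ) < M) hg
    (by omega : (-2) * M < A - B + 1) (by omega : A - B + 1 < 1 * M)
  have hgm : g = -1 := by omega
  subst hgm
  simp only [mul_neg_one] at hg
  have h1 : M ∣ A + 2 * B - 2 := by
    apply half_dvd
    obtain ⟨c, hc'⟩ := hdvd
    exact ⟨c, by linarith⟩
  have h2 : M ∣ 3 * (B - 1) := by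
    obtain ⟨c, hc'⟩ := h1
    exact ⟨c + 1, by linarith⟩
  obtain ⟨w, hw⟩ := cancel3 hc (by omega) h2
  have hw0 : w = 0 := by
    have := bound_g (by omega : (0:ℤ) < M) hw
      (by omega : (-1) * M < B - 1) (by omega : B - 1 < 1 * M)
    omega
  subst hw0
  simp only [mul_zero] at hw
  omega

/-- C = 3 - M, A ∈ [0, M-2], B ∈ [-(M-1), M-1]. -/
lemma shape7 {M A B : ℤ} (hM : 2 ≤ M)
    (hc : ∀ y : ℤ, 2 * M ∣ 3 * y → 2 * M ∣ y)
    (hA1 : 0 ≤ A) (hA2 : A ≤ M - 2) (hB1 : -(M - 1) ≤ B) (hB2 : B ≤ M - 1)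
    (hdiv : 2 * M ^ 2 ∣ A * (2 * M + 3) + B * (4 * M - 3) + (3 - M)) :
    False := by
  obtain ⟨g, hg, hodd, hdvd⟩ := keyLs (by omega) hc hdiv
  have hgb := bound_g (by omega : (0:ℤ) < M) hg
    (by omega : (-1) * M < A - B + 1) (by omega : A - B + 1 < 2 * M)
  have hgm : g = 1 := by omega
  subst hgm
  simp only [mul_one] at hg
  have h1 : M ∣ A + 2 * B + 1 := by
    apply half_dvd
    obtain ⟨c, hc'⟩ := hdvd
    exact ⟨c, by linarith⟩
  have h2 : M ∣ 3 * B := by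
    obtain ⟨c, hc'⟩ := h1
    exact ⟨c - 1, by linarith⟩
  obtain ⟨w, hw⟩ := cancel3 hc (by omega) h2
  have hw0 : w = 0 := by
    have := bound_g (by omega : (0:ℤ) < M) hw
      (by omega : (-1) * M < B) (by omega : B < 1 * M)
    omega
  subst hw0
  simp only [mul_zero] at hw
  omega

/-- C = 3 - M, A ∈ [0, 2M-4], B ∈ [-M, -1]. -/
lemma shape8 {M A B : ℤ} (hM : 2 ≤ M)
    (hc : ∀ y : ℤ, 2 * M ∣ 3 * y → 2 * M ∣ y)
    (hA1 : 0 ≤ A) (hA2 : A ≤ 2 * M - 4) (hB1 : -M ≤ B) (hB2 : B ≤ -1)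
    (hdiv : 2 * M ^ 2 ∣ A * (2 * M + 3) + B * (4 * M - 3) + (3 - M)) :
    False := by
  obtain ⟨g, hg, hodd, hdvd⟩ := keyLs (by omega) hc hdiv
  have hgb := bound_g (by omega : (0:ℤ) < M) hg
    (by omega : 0 * M < A - B + 1) (by omega : A - B + 1 < 3 * M)
  have hgm : g = 1 := by omega
  subst hgm
  simp only [mul_one] at hg
  have h1 : M ∣ A + 2 * B + 1 := by
    apply half_dvd
    obtain ⟨c, hc'⟩ := hdvd
    exact ⟨c, by linarith⟩
  have h2 : M ∣ 3 * B := by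
    obtain ⟨c, hc'⟩ := h1
    exact ⟨c - 1, by linarith⟩
  obtain ⟨w, hw⟩ := cancel3 hc (by omega) h2
  have hw0 : w = -1 ∨ w = 0 := by
    have := bound_g (by omega : (0:ℤ) < M) hw
      (by omega : (-2) * M < B) (by omega : B < 1 * M)
    omega
  rcases hw0 with rfl | rfl
  · simp only [mul_neg_one] at hw
    omega
  · simp only [mul_zero] at hw
    omega

/-- C = 6 - 2M, A ∈ [0, 2M-4], B ∈ [-(M-1), M]. -/
lemma shape5 {M A B : ℤ} (hM : 2 ≤ M)
    (hc : ∀ y : ℤ, 2 * M ∣ 3 * y → 2 * M ∣ y)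
    (hA1 : 0 ≤ A) (hA2 : A ≤ 2 * M - 4) (hB1 : -(M - 1) ≤ B) (hB2 : B ≤ M)
    (hdiv : 2 * M ^ 2 ∣ A * (2 * M + 3) + B * (4 * M - 3) + (6 - 2 * M)) :
    False := by
  obtain ⟨h, hh, hdvd⟩ := keyL2s (by omega) hc hdiv
  have hhb := bound_g (by omega : (0:ℤ) < 2 * M)
    (by linarith [hh] : A - B + 2 = (2 * M) * h)
    (by omega : (-1) * (2 * M) < A - B + 2) (by omega : A - B + 2 < 2 * (2 * M))
  have hcase : h = 0 ∨ h = 1 := by omega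
  rcases hcase with rfl | rfl
  · -- h = 0 : B = A + 2, M ∣ 3(A+1)
    simp only [mul_zero] at hh
    have hB : B = A + 2 := by omega
    have h2 : M ∣ 3 * (A + 1) := by
      obtain ⟨c, hc'⟩ := hdvd
      exact ⟨c, by linarith⟩
    obtain ⟨w, hw⟩ := cancel3 hc (by omega) h2
    have hw0 : w = 1 := by
      have := bound_g (by omega : (0:ℤ) < M) hw
        (by omega : 0 * M < A + 1) (by omega : A + 1 < 2 * M)
      omega
    subst hw0
    simp only [mul_one] at hw
    omega
  · -- h = 1 : A = B + 2M - 2, M ∣ 3B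
    simp only [mul_one] at hh
    have h2 : M ∣ 3 * B := by
      obtain ⟨c, hc'⟩ := hdvd
      exact ⟨c - 2, by linarith⟩
    obtain ⟨w, hw⟩ := cancel3 hc (by omega) h2
    have hw0 : w = 0 ∨ w = 1 := by
      have := bound_g (by omega : (0:ℤ) < M) hw
        (by omega : (-1) * M < B) (by omega : B < 2 * M)
      omega
    rcases hw0 with rfl | rfl
    · simp only [mul_zero] at hw
      omega
    · simp only [mul_one] at hw
      omega


section ZModLayer

variable {n m : ℕ} [NeZero n]

/-- integer exponent for `A`-rotations -/
def fx (m : ℕ) (t : ℕ) : ℤ := -((m:ℤ) - 3) + (t:ℤ) * (2 * (m:ℤ) + 3)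
/-- integer exponent for `B`-rotations -/
def fy (m : ℕ) (u : ℕ) : ℤ := -((m:ℤ) - 3) + (u:ℤ) * (4 * (m:ℤ) - 3)

lemma fx_def (m t : ℕ) :
    -((m:ℤ) - 3) + (t:ℤ) * (2 * (m:ℤ) + 3) = fx m t := rfl
lemma fy_def (m u : ℕ) :
    -((m:ℤ) - 3) + (u:ℤ) * (4 * (m:ℤ) - 3) = fy m u := rfl

lemma dvd_of_cast_eq (hn : n = 2 * m ^ 2) {z w : ℤ}
    (h : ((z : ZMod n)) = (w : ZMod n)) : 2 * (m:ℤ) ^ 2 ∣ w - z := by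
  rw [ZMod.intCast_eq_intCast_iff_dvd_sub] at h
  have : ((n : ℕ) : ℤ) = 2 * (m:ℤ)^2 := by rw [hn]; push_cast; ring
  rwa [this] at h

variable (hm : 2 ≤ m) (hn : n = 2 * m ^ 2)
  (hc : ∀ y : ℤ, 2 * (m:ℤ) ∣ 3 * y → 2 * (m:ℤ) ∣ y)

section
include hm hn hc

lemma ne0x {t : ℕ} (ht : t < m - 1) : ((fx m t : ℤ) : ZMod n) ≠ 0 := by
  intro h
  rw [show (0 : ZMod n) = ((0:ℤ) : ZMod n) by norm_cast] at h
  have hd := dvd_of_cast_eq hn h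
  have e : (0:ℤ) - fx m t = -((t:ℤ) * (2*(m:ℤ)+3) + 0 * (4*(m:ℤ)-3) + (3 - (m:ℤ))) := by
    unfold fx; ring
  rw [e, dvd_neg] at hd
  exact shape7 (by omega) hc (by omega) (by omega) (by omega) (by omega) hd

lemma ne0y {u : ℕ} (hu1 : 1 ≤ u) (hu2 : u ≤ m) : ((fy m u : ℤ) : ZMod n) ≠ 0 := by
  intro h
  rw [show (0 : ZMod n) = ((0:ℤ) : ZMod n) by norm_cast] at h
  have hd := dvd_of_cast_eq hn h
  have e : (0:ℤ) - fy m u = -((0:ℤ) * (2*(m:ℤ)+3) + (u:ℤ) * (4*(m:ℤ)-3) + (3 - (m:ℤ))) := by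
    unfold fy; ring
  rw [e, dvd_neg] at hd
  exact shape6 (by omega) hc (by omega) (by omega) (by omega) (by omega) hd

lemma ne0p {t u : ℕ} (ht : t < m - 1) (hu1 : 1 ≤ u) (hu2 : u ≤ m) :
    ((fx m t + fy m u : ℤ) : ZMod n) ≠ 0 := by
  intro h
  rw [show (0 : ZMod n) = ((0:ℤ) : ZMod n) by norm_cast] at h
  have hd := dvd_of_cast_eq hn h
  have e : (0:ℤ) - (fx m t + fy m u)
      = -((t:ℤ) * (2*(m:ℤ)+3) + (u:ℤ) * (4*(m:ℤ)-3) + (6 - 2*(m:ℤ))) := by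
    unfold fx fy; ring
  rw [e, dvd_neg] at hd
  exact shape5 (by omega) hc (by omega) (by omega) (by omega) (by omega) hd

lemma ne0q {t u : ℕ} (ht : t < m - 1) (hu1 : 1 ≤ u) (hu2 : u ≤ m) :
    ((fy m u - fx m t : ℤ) : ZMod n) ≠ 0 := by
  intro h
  rw [show (0 : ZMod n) = ((0:ℤ) : ZMod n) by norm_cast] at h
  have hd := dvd_of_cast_eq hn h
  have e : (0:ℤ) - (fy m u - fx m t)
      = -((-(t:ℤ)) * (2*(m:ℤ)+3) + (u:ℤ) * (4*(m:ℤ)-3)) := by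
    unfold fx fy; ring
  rw [e, dvd_neg] at hd
  exact shape0' (by omega) hc (by omega) (by omega) (by omega) hd

lemma injx {t t' : ℕ} (ht : t < m - 1) (ht' : t' < m - 1)
    (h : ((fx m t : ℤ) : ZMod n) = ((fx m t' : ℤ) : ZMod n)) : t = t' := by
  have hd := dvd_of_cast_eq hn h
  have e : fx m t' - fx m t
      = ((t':ℤ) - t) * (2*(m:ℤ)+3) + 0 * (4*(m:ℤ)-3) := by unfold fx; ring
  rw [e] at hd
  have := shape0 (by omega) hc (by omega) (by omega) (by omega) (by omega) hd
  omega

lemma injy {u u' : ℕ} (hu1 : 1 ≤ u) (hu2 : u ≤ m) (hu1' : 1 ≤ u') (hu2' : u' ≤ m)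
    (h : ((fy m u : ℤ) : ZMod n) = ((fy m u' : ℤ) : ZMod n)) : u = u' := by
  have hd := dvd_of_cast_eq hn h
  have e : fy m u' - fy m u
      = (0:ℤ) * (2*(m:ℤ)+3) + ((u':ℤ) - u) * (4*(m:ℤ)-3) := by unfold fy; ring
  rw [e] at hd
  have := shape0 (by omega) hc (by omega) (by omega) (by omega) (by omega) hd
  omega

lemma injp {t u t' u' : ℕ} (ht : t < m - 1) (hu1 : 1 ≤ u) (hu2 : u ≤ m)
    (ht' : t' < m - 1) (hu1' : 1 ≤ u') (hu2' : u' ≤ m)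
    (h : ((fx m t + fy m u : ℤ) : ZMod n) = ((fx m t' + fy m u' : ℤ) : ZMod n)) :
    t = t' ∧ u = u' := by
  have hd := dvd_of_cast_eq hn h
  have e : (fx m t' + fy m u') - (fx m t + fy m u)
      = ((t':ℤ) - t) * (2*(m:ℤ)+3) + ((u':ℤ) - u) * (4*(m:ℤ)-3) := by
    unfold fx fy; ring
  rw [e] at hd
  have := shape0 (by omega) hc (by omega) (by omega) (by omega) (by omega) hd
  omega

lemma injq {t u t' u' : ℕ} (ht : t < m - 1) (hu1 : 1 ≤ u) (hu2 : u ≤ m)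
    (ht' : t' < m - 1) (hu1' : 1 ≤ u') (hu2' : u' ≤ m)
    (h : ((fy m u - fx m t : ℤ) : ZMod n) = ((fy m u' - fx m t' : ℤ) : ZMod n)) :
    t = t' ∧ u = u' := by
  have hd := dvd_of_cast_eq hn h
  have e : (fy m u' - fx m t') - (fy m u - fx m t)
      = ((t:ℤ) - t') * (2*(m:ℤ)+3) + ((u':ℤ) - u) * (4*(m:ℤ)-3) := by
    unfold fx fy; ring
  rw [e] at hd
  have := shape0 (by omega) hc (by omega) (by omega) (by omega) (by omega) hd
  omega

lemma disj_xy {t u : ℕ} (ht : t < m - 1) (hu1 : 1 ≤ u) (hu2 : u ≤ m)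
    (h : ((fx m t : ℤ) : ZMod n) = ((fy m u : ℤ) : ZMod n)) : False := by
  have hd := dvd_of_cast_eq hn h
  have e : fy m u - fx m t
      = (-(t:ℤ)) * (2*(m:ℤ)+3) + (u:ℤ) * (4*(m:ℤ)-3) := by unfold fx fy; ring
  rw [e] at hd
  exact shape0' (by omega) hc (by omega) (by omega) (by omega) hd

lemma disj_pq {t u t' u' : ℕ} (ht : t < m - 1) (hu1 : 1 ≤ u) (hu2 : u ≤ m)
    (ht' : t' < m - 1) (hu1' : 1 ≤ u') (hu2' : u' ≤ m)
    (h : ((fx m t + fy m u : ℤ) : ZMod n) = ((fy m u' - fx m t' : ℤ) : ZMod n)) :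
    False := by
  have hd := dvd_of_cast_eq hn h
  have e : (fy m u' - fx m t') - (fx m t + fy m u)
      = -(((t:ℤ) + t') * (2*(m:ℤ)+3) + ((u:ℤ) - u') * (4*(m:ℤ)-3) + (6 - 2*(m:ℤ))) := by
    unfold fx fy; ring
  rw [e, dvd_neg] at hd
  exact shape5 (by omega) hc (by omega) (by omega) (by omega) (by omega) hd

lemma disj_px {t u t' : ℕ} (ht : t < m - 1) (hu1 : 1 ≤ u) (hu2 : u ≤ m)
    (ht' : t' < m - 1)
    (h : ((fx m t + fy m u : ℤ) : ZMod n) = ((fx m t' : ℤ) : ZMod n)) : False := by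
  have hd := dvd_of_cast_eq hn h
  have e : fx m t' - (fx m t + fy m u)
      = -(((t:ℤ) - t') * (2*(m:ℤ)+3) + (u:ℤ) * (4*(m:ℤ)-3) + (3 - (m:ℤ))) := by
    unfold fx fy; ring
  rw [e, dvd_neg] at hd
  exact shape6 (by omega) hc (by omega) (by omega) (by omega) (by omega) hd

lemma disj_py {t u u' : ℕ} (ht : t < m - 1) (hu1 : 1 ≤ u) (hu2 : u ≤ m)
    (hu1' : 1 ≤ u') (hu2' : u' ≤ m)
    (h : ((fx m t + fy m u : ℤ) : ZMod n) = ((fy m u' : ℤ) : ZMod n)) : False := by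
  have hd := dvd_of_cast_eq hn h
  have e : fy m u' - (fx m t + fy m u)
      = -((t:ℤ) * (2*(m:ℤ)+3) + ((u:ℤ) - u') * (4*(m:ℤ)-3) + (3 - (m:ℤ))) := by
    unfold fx fy; ring
  rw [e, dvd_neg] at hd
  exact shape7 (by omega) hc (by omega) (by omega) (by omega) (by omega) hd

lemma disj_qx {t u t' : ℕ} (ht : t < m - 1) (hu1 : 1 ≤ u) (hu2 : u ≤ m)
    (ht' : t' < m - 1)
    (h : ((fy m u - fx m t : ℤ) : ZMod n) = ((fx m t' : ℤ) : ZMod n)) : False := by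
  have hd := dvd_of_cast_eq hn h
  have e : fx m t' - (fy m u - fx m t)
      = ((t:ℤ) + t') * (2*(m:ℤ)+3) + (-(u:ℤ)) * (4*(m:ℤ)-3) + (3 - (m:ℤ)) := by
    unfold fx fy; ring
  rw [e] at hd
  exact shape8 (by omega) hc (by omega) (by omega) (by omega) (by omega) hd

lemma disj_qy {t u u' : ℕ} (ht : t < m - 1) (hu1 : 1 ≤ u) (hu2 : u ≤ m)
    (hu1' : 1 ≤ u') (hu2' : u' ≤ m)
    (h : ((fy m u - fx m t : ℤ) : ZMod n) = ((fy m u' : ℤ) : ZMod n)) : False := by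
  have hd := dvd_of_cast_eq hn h
  have e : fy m u' - (fy m u - fx m t)
      = (t:ℤ) * (2*(m:ℤ)+3) + ((u':ℤ) - u) * (4*(m:ℤ)-3) + (3 - (m:ℤ)) := by
    unfold fx fy; ring
  rw [e] at hd
  exact shape7 (by omega) hc (by omega) (by omega) (by omega) (by omega) hd


end
end ZModLayer

section
variable {n m : ℕ} [NeZero n]

/-- the four value families partition the nonzero residues -/
lemma cover (hm : 2 ≤ m) (hn : n = 2 * m ^ 2)
    (hc : ∀ y : ℤ, 2 * (m:ℤ) ∣ 3 * y → 2 * (m:ℤ) ∣ y) :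
    ((Finset.range (m-1) ×ˢ Finset.Icc 1 m).image
        (fun tu => ((fx m tu.1 + fy m tu.2 : ℤ) : ZMod n))) ∪
      ((Finset.range (m-1) ×ˢ Finset.Icc 1 m).image
        (fun tu => ((fy m tu.2 - fx m tu.1 : ℤ) : ZMod n))) ∪
      ((Finset.range (m-1)).image (fun t => ((fx m t : ℤ) : ZMod n))) ∪
      ((Finset.Icc 1 m).image (fun u => ((fy m u : ℤ) : ZMod n)))
      = Finset.univ \ {0} := by
  set P := (Finset.range (m-1) ×ˢ Finset.Icc 1 m).image
      (fun tu => ((fx m tu.1 + fy m tu.2 : ℤ) : ZMod n)) with hP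
  set Q := (Finset.range (m-1) ×ˢ Finset.Icc 1 m).image
      (fun tu => ((fy m tu.2 - fx m tu.1 : ℤ) : ZMod n)) with hQ
  set X := (Finset.range (m-1)).image (fun t => ((fx m t : ℤ) : ZMod n)) with hX
  set Y := (Finset.Icc 1 m).image (fun u => ((fy m u : ℤ) : ZMod n)) with hY
  have memP : ∀ z ∈ P, ∃ t u : ℕ, t < m - 1 ∧ 1 ≤ u ∧ u ≤ m ∧
      z = ((fx m t + fy m u : ℤ) : ZMod n) := by
    intro z hz
    rw [hP, Finset.mem_image] at hz
    obtain ⟨⟨t, u⟩, htu, hztu⟩ := hz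
    rw [Finset.mem_product, Finset.mem_range, Finset.mem_Icc] at htu
    exact ⟨t, u, htu.1, htu.2.1, htu.2.2, hztu.symm⟩
  have memQ : ∀ z ∈ Q, ∃ t u : ℕ, t < m - 1 ∧ 1 ≤ u ∧ u ≤ m ∧
      z = ((fy m u - fx m t : ℤ) : ZMod n) := by
    intro z hz
    rw [hQ, Finset.mem_image] at hz
    obtain ⟨⟨t, u⟩, htu, hztu⟩ := hz
    rw [Finset.mem_product, Finset.mem_range, Finset.mem_Icc] at htu
    exact ⟨t, u, htu.1, htu.2.1, htu.2.2, hztu.symm⟩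
  have memX : ∀ z ∈ X, ∃ t : ℕ, t < m - 1 ∧ z = ((fx m t : ℤ) : ZMod n) := by
    intro z hz
    rw [hX, Finset.mem_image] at hz
    obtain ⟨t, ht, hzt⟩ := hz
    rw [Finset.mem_range] at ht
    exact ⟨t, ht, hzt.symm⟩
  have memY : ∀ z ∈ Y, ∃ u : ℕ, 1 ≤ u ∧ u ≤ m ∧ z = ((fy m u : ℤ) : ZMod n) := by
    intro z hz
    rw [hY, Finset.mem_image] at hz
    obtain ⟨u, hu, hzu⟩ := hz
    rw [Finset.mem_Icc] at hu
    exact ⟨u, hu.1, hu.2, hzu.symm⟩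
  -- subset
  apply Finset.eq_of_subset_of_card_le
  · intro z hz
    rw [Finset.mem_sdiff]
    refine ⟨Finset.mem_univ _, ?_⟩
    rw [Finset.mem_singleton]
    rcases Finset.mem_union.1 hz with hz' | hzY
    · rcases Finset.mem_union.1 hz' with hz'' | hzX
      · rcases Finset.mem_union.1 hz'' with hzP | hzQ
        · obtain ⟨t, u, ht, hu1, hu2, rfl⟩ := memP _ hzP
          exact ne0p hm hn hc ht hu1 hu2
        · obtain ⟨t, u, ht, hu1, hu2, rfl⟩ := memQ _ hzQ
          exact ne0q hm hn hc ht hu1 hu2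
      · obtain ⟨t, ht, rfl⟩ := memX _ hzX
        exact ne0x hm hn hc ht
    · obtain ⟨u, hu1, hu2, rfl⟩ := memY _ hzY
      exact ne0y hm hn hc hu1 hu2
  -- cardinality
  · have hdom : (Finset.range (m-1) ×ˢ Finset.Icc 1 m).card = (m - 1) * m := by
      rw [Finset.card_product, Finset.card_range, Nat.card_Icc, Nat.add_sub_cancel]
    have hcardP : P.card = (m - 1) * m := by
      rw [hP, Finset.card_image_of_injOn, hdom]
      intro ⟨t, u⟩ htu ⟨t', u'⟩ htu' h
      rw [Finset.mem_coe, Finset.mem_product, Finset.mem_range, Finset.mem_Icc] at htu htu'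
      have := injp hm hn hc htu.1 htu.2.1 htu.2.2 htu'.1 htu'.2.1 htu'.2.2 h
      exact Prod.ext this.1 this.2
    have hcardQ : Q.card = (m - 1) * m := by
      rw [hQ, Finset.card_image_of_injOn, hdom]
      intro ⟨t, u⟩ htu ⟨t', u'⟩ htu' h
      rw [Finset.mem_coe, Finset.mem_product, Finset.mem_range, Finset.mem_Icc] at htu htu'
      have := injq hm hn hc htu.1 htu.2.1 htu.2.2 htu'.1 htu'.2.1 htu'.2.2 h
      exact Prod.ext this.1 this.2
    have hcardX : X.card = m - 1 := by
      rw [hX, Finset.card_image_of_injOn, Finset.card_range]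
      intro t ht t' ht' h
      rw [Finset.mem_coe, Finset.mem_range] at ht ht'
      exact injx hm hn hc ht ht' h
    have hcardY : Y.card = m := by
      rw [hY, Finset.card_image_of_injOn, Nat.card_Icc, Nat.add_sub_cancel]
      intro u hu u' hu' h
      rw [Finset.mem_coe, Finset.mem_Icc] at hu hu'
      exact injy hm hn hc hu.1 hu.2 hu'.1 hu'.2 h
    have hdPQ : Disjoint P Q := by
      rw [Finset.disjoint_left]
      intro z hzP hzQ
      obtain ⟨t, u, ht, hu1, hu2, rfl⟩ := memP _ hzP
      obtain ⟨t', u', ht', hu1', hu2', he⟩ := memQ _ hzQ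
      exact disj_pq hm hn hc ht hu1 hu2 ht' hu1' hu2' he
    have hdPQX : Disjoint (P ∪ Q) X := by
      rw [Finset.disjoint_left]
      intro z hzPQ hzX
      obtain ⟨t', ht', rfl⟩ := memX _ hzX
      rcases Finset.mem_union.1 hzPQ with hzP | hzQ
      · obtain ⟨t, u, ht, hu1, hu2, he⟩ := memP _ hzP
        exact disj_px hm hn hc ht hu1 hu2 ht' he.symm
      · obtain ⟨t, u, ht, hu1, hu2, he⟩ := memQ _ hzQ
        exact disj_qx hm hn hc ht hu1 hu2 ht' he.symm
    have hdPQXY : Disjoint (P ∪ Q ∪ X) Y := by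
      rw [Finset.disjoint_left]
      intro z hzPQX hzY
      obtain ⟨u', hu1', hu2', rfl⟩ := memY _ hzY
      rcases Finset.mem_union.1 hzPQX with hzPQ | hzX
      · rcases Finset.mem_union.1 hzPQ with hzP | hzQ
        · obtain ⟨t, u, ht, hu1, hu2, he⟩ := memP _ hzP
          exact disj_py hm hn hc ht hu1 hu2 hu1' hu2' he.symm
        · obtain ⟨t, u, ht, hu1, hu2, he⟩ := memQ _ hzQ
          exact disj_qy hm hn hc ht hu1 hu2 hu1' hu2' he.symm
      · obtain ⟨t, ht, he⟩ := memX _ hzX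
        exact disj_xy hm hn hc ht hu1' hu2' he.symm
    rw [Finset.card_union_of_disjoint hdPQXY, Finset.card_union_of_disjoint hdPQX,
      Finset.card_union_of_disjoint hdPQ, hcardP, hcardQ, hcardX, hcardY]
    have hcu : (Finset.univ \ {(0 : ZMod n)}).card = n - 1 := by
      rw [Finset.card_sdiff_of_subset (by simp), Finset.card_singleton, Finset.card_univ, ZMod.card]
    rw [hcu]
    obtain ⟨m', rfl⟩ : ∃ m', m = m' + 2 := ⟨m - 2, by omega⟩
    have e1 : (m' + 2 - 1) * (m' + 2) = m' * m' + 3 * m' + 2 := by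
      rw [show m' + 2 - 1 = m' + 1 from rfl]; ring
    have e2 : n = 2 * (m' * m') + 8 * m' + 8 := by rw [hn]; ring
    omega

end
end NF6

open NF6 DihedralGroup in
/-- The Bacsó et al. construction: with `n = 2^(2k-1)`, `d₁ = 2^k + 3`,
`d₂ = 2^(k+1) - 3`, `a₀ = 2^(k-1) - 1`, `b₀ = 2^(k-1)`, `s = 2^(k-1) - 3`,
`A' = {b^{-s+t·d₁} : 0 ≤ t ≤ a₀-1} ∪ {ab^{-s+t·d₁} : 0 ≤ t ≤ a₀-1} ∪ {a}` and
`B' = {b^{-s+t·d₂} : 1 ≤ t ≤ b₀} ∪ {ab^{-s+t·d₂} : 1 ≤ t ≤ b₀} ∪ {e}`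
form a `(2^k - 1, 2^k + 1)`-near-factorization of `D_n`. -/
theorem stmt6 (k n : ℕ) (hk : 2 ≤ k) (hn : n = 2 ^ (2 * k - 1)) [NeZero n]
    (A' B' : Finset (DihedralGroup n))
    (hA' : A' = ((Finset.range (2 ^ (k - 1) - 1)).image
                  fun t : ℕ => DihedralGroup.r
                    ((-((2 : ℤ) ^ (k - 1) - 3) + (t : ℤ) * ((2 : ℤ) ^ k + 3) : ℤ) : ZMod n)) ∪
              ((Finset.range (2 ^ (k - 1) - 1)).image
                  fun t : ℕ => DihedralGroup.sr
                    ((-((2 : ℤ) ^ (k - 1) - 3) + (t : ℤ) * ((2 : ℤ) ^ k + 3) : ℤ) : ZMod n)) ∪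
              {DihedralGroup.sr 0})
    (hB' : B' = ((Finset.Icc 1 (2 ^ (k - 1))).image
                  fun t : ℕ => DihedralGroup.r
                    ((-((2 : ℤ) ^ (k - 1) - 3) + (t : ℤ) * ((2 : ℤ) ^ (k + 1) - 3) : ℤ) : ZMod n)) ∪
              ((Finset.Icc 1 (2 ^ (k - 1))).image
                  fun t : ℕ => DihedralGroup.sr
                    ((-((2 : ℤ) ^ (k - 1) - 3) + (t : ℤ) * ((2 : ℤ) ^ (k + 1) - 3) : ℤ) : ZMod n)) ∪
              {1}) :
    A'.card = 2 ^ k - 1 ∧ B'.card = 2 ^ k + 1 ∧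
      A'.card * B'.card = 2 * n - 1 ∧ A' * B' = Finset.univ \ {1} := by
  -- setup
  set m : ℕ := 2 ^ (k - 1) with hmdef
  have hm2 : 2 ≤ m := by
    rw [hmdef]
    calc 2 = 2 ^ 1 := by norm_num
    _ ≤ 2 ^ (k - 1) := Nat.pow_le_pow_right (by norm_num) (by omega)
  have hmz : ((2:ℤ))^(k-1) = (m:ℤ) := by rw [hmdef]; push_cast; ring
  have h2k : ((2:ℤ))^k = 2 * (m:ℤ) := by
    rw [show k = (k-1)+1 by omega, pow_succ, hmz]; ring
  have h2k1 : ((2:ℤ))^(k+1) = 4 * (m:ℤ) := by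
    rw [show k+1 = (k-1)+2 by omega, pow_add, hmz]; ring
  have hn2 : n = 2 * m ^ 2 := by
    rw [hn, hmdef, show 2*k-1 = (k-1)*2+1 by omega, pow_succ, pow_mul]; ring
  have hkn : 2 ^ k = 2 * m := by
    rw [hmdef, ← pow_succ']
    congr 1
    omega
  have hc : ∀ y : ℤ, 2 * (m:ℤ) ∣ 3 * y → 2 * (m:ℤ) ∣ y := by
    intro y hdvd
    have h2m : (2:ℤ) * (m:ℤ) = 2 ^ k := by rw [h2k]
    rw [h2m] at hdvd ⊢
    have hcop : IsCoprime ((2:ℤ)^k) 3 :=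
      IsCoprime.pow_left ⟨-1, 1, by ring⟩
    exact hcop.dvd_of_dvd_mul_left hdvd
  -- rewrite hypotheses into fx/fy form
  simp only [hmz, h2k, h2k1] at hA' hB'
  simp only [fx_def, fy_def] at hA' hB'
  -- basic membership characterizations
  have memA : ∀ a ∈ A', (∃ t, t < m - 1 ∧ a = r ((fx m t : ℤ) : ZMod n)) ∨
      (∃ t, t < m - 1 ∧ a = sr ((fx m t : ℤ) : ZMod n)) ∨ a = sr 0 := by
    intro a ha
    rw [hA'] at ha
    rcases Finset.mem_union.1 ha with h1 | h2
    · rcases Finset.mem_union.1 h1 with h3 | h4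
      · obtain ⟨t, ht, rfl⟩ := Finset.mem_image.1 h3
        exact Or.inl ⟨t, Finset.mem_range.1 ht, rfl⟩
      · obtain ⟨t, ht, rfl⟩ := Finset.mem_image.1 h4
        exact Or.inr (Or.inl ⟨t, Finset.mem_range.1 ht, rfl⟩)
    · exact Or.inr (Or.inr (Finset.mem_singleton.1 h2))
  have memB : ∀ b ∈ B', (∃ u, 1 ≤ u ∧ u ≤ m ∧ b = r ((fy m u : ℤ) : ZMod n)) ∨
      (∃ u, 1 ≤ u ∧ u ≤ m ∧ b = sr ((fy m u : ℤ) : ZMod n)) ∨ b = 1 := by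
    intro b hb
    rw [hB'] at hb
    rcases Finset.mem_union.1 hb with h1 | h2
    · rcases Finset.mem_union.1 h1 with h3 | h4
      · obtain ⟨u, hu, rfl⟩ := Finset.mem_image.1 h3
        rw [Finset.mem_Icc] at hu
        exact Or.inl ⟨u, hu.1, hu.2, rfl⟩
      · obtain ⟨u, hu, rfl⟩ := Finset.mem_image.1 h4
        rw [Finset.mem_Icc] at hu
        exact Or.inr (Or.inl ⟨u, hu.1, hu.2, rfl⟩)
    · exact Or.inr (Or.inr (Finset.mem_singleton.1 h2))
  have hAr : ∀ t, t < m - 1 → r ((fx m t : ℤ) : ZMod n) ∈ A' := by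
    intro t ht
    rw [hA']
    exact Finset.mem_union_left _ (Finset.mem_union_left _
      (Finset.mem_image.2 ⟨t, Finset.mem_range.2 ht, rfl⟩))
  have hAsr : ∀ t, t < m - 1 → sr ((fx m t : ℤ) : ZMod n) ∈ A' := by
    intro t ht
    rw [hA']
    exact Finset.mem_union_left _ (Finset.mem_union_right _
      (Finset.mem_image.2 ⟨t, Finset.mem_range.2 ht, rfl⟩))
  have hAs : sr (0 : ZMod n) ∈ A' := by
    rw [hA']; exact Finset.mem_union_right _ (Finset.mem_singleton_self _)
  have hBr : ∀ u, 1 ≤ u → u ≤ m → r ((fy m u : ℤ) : ZMod n) ∈ B' := by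
    intro u h1 h2
    rw [hB']
    exact Finset.mem_union_left _ (Finset.mem_union_left _
      (Finset.mem_image.2 ⟨u, Finset.mem_Icc.2 ⟨h1, h2⟩, rfl⟩))
  have hBsr : ∀ u, 1 ≤ u → u ≤ m → sr ((fy m u : ℤ) : ZMod n) ∈ B' := by
    intro u h1 h2
    rw [hB']
    exact Finset.mem_union_left _ (Finset.mem_union_right _
      (Finset.mem_image.2 ⟨u, Finset.mem_Icc.2 ⟨h1, h2⟩, rfl⟩))
  have hB1 : (1 : DihedralGroup n) ∈ B' := by
    rw [hB']; exact Finset.mem_union_right _ (Finset.mem_singleton_self _)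
  -- cardinalities
  have hcardA : A'.card = 2 ^ k - 1 := by
    rw [hA']
    rw [Finset.card_union_of_disjoint, Finset.card_union_of_disjoint]
    · rw [Finset.card_image_of_injOn, Finset.card_image_of_injOn,
        Finset.card_range, Finset.card_singleton, hkn]
      · omega
      · intro t ht t' ht' h
        rw [Finset.mem_coe, Finset.mem_range] at ht ht'
        simp only [sr.injEq] at h
        exact injx hm2 hn2 hc ht ht' h
      · intro t ht t' ht' h
        rw [Finset.mem_coe, Finset.mem_range] at ht ht'
        simp only [r.injEq] at h
        exact injx hm2 hn2 hc ht ht' h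
    · rw [Finset.disjoint_left]
      intro a ha ha'
      obtain ⟨t, ht, rfl⟩ := Finset.mem_image.1 ha
      obtain ⟨t', ht', he⟩ := Finset.mem_image.1 ha'
      exact absurd he (by simp)
    · rw [Finset.disjoint_left]
      intro a ha ha'
      rw [Finset.mem_singleton] at ha'
      subst ha'
      rcases Finset.mem_union.1 ha with h1 | h2
      · obtain ⟨t, ht, he⟩ := Finset.mem_image.1 h1
        exact absurd he (by simp)
      · obtain ⟨t, ht, he⟩ := Finset.mem_image.1 h2
        rw [sr.injEq] at he
        exact ne0x hm2 hn2 hc (Finset.mem_range.1 ht) he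
  have hcardB : B'.card = 2 ^ k + 1 := by
    rw [hB']
    rw [Finset.card_union_of_disjoint, Finset.card_union_of_disjoint]
    · rw [Finset.card_image_of_injOn, Finset.card_image_of_injOn,
        Nat.card_Icc, Finset.card_singleton, hkn]
      · omega
      · intro u hu u' hu' h
        rw [Finset.mem_coe, Finset.mem_Icc] at hu hu'
        simp only [sr.injEq] at h
        exact injy hm2 hn2 hc hu.1 hu.2 hu'.1 hu'.2 h
      · intro u hu u' hu' h
        rw [Finset.mem_coe, Finset.mem_Icc] at hu hu'
        simp only [r.injEq] at h
        exact injy hm2 hn2 hc hu.1 hu.2 hu'.1 hu'.2 h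
    · rw [Finset.disjoint_left]
      intro b hb hb'
      obtain ⟨u, hu, rfl⟩ := Finset.mem_image.1 hb
      obtain ⟨u', hu', he⟩ := Finset.mem_image.1 hb'
      exact absurd he (by simp)
    · rw [Finset.disjoint_left]
      intro b hb hb'
      rw [Finset.mem_singleton] at hb'
      subst hb'
      rcases Finset.mem_union.1 hb with h1 | h2
      · obtain ⟨u, hu, he⟩ := Finset.mem_image.1 h1
        rw [Finset.mem_Icc] at hu
        rw [one_def, r.injEq] at he
        exact ne0y hm2 hn2 hc hu.1 hu.2 he
      · obtain ⟨u, hu, he⟩ := Finset.mem_image.1 h2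
        rw [one_def] at he
        exact absurd he (fun h => by cases h)
  have hcardprod : A'.card * B'.card = 2 * n - 1 := by
    rw [hcardA, hcardB, hkn]
    obtain ⟨m', hm'⟩ : ∃ m', m = m' + 2 := ⟨m - 2, by omega⟩
    rw [hm'] at hn2 ⊢
    have e1 : (2 * (m' + 2) - 1) * (2 * (m' + 2) + 1)
        = 4 * (m' * m') + 16 * m' + 15 := by
      rw [show 2 * (m' + 2) - 1 = 2 * m' + 3 by omega]; ring
    have e2 : n = 2 * (m' * m') + 8 * m' + 8 := by rw [hn2]; ring
    omega
  refine ⟨hcardA, hcardB, hcardprod, ?_⟩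
  -- the product set
  have hcov := cover (n := n) hm2 hn2 hc
  ext g
  simp only [Finset.mem_sdiff, Finset.mem_univ, Finset.mem_singleton, true_and]
  constructor
  · intro hg
    obtain ⟨a, ha, b, hb, rfl⟩ := Finset.mem_mul.1 hg
    rcases memA a ha with ⟨t, ht, rfl⟩ | ⟨t, ht, rfl⟩ | rfl <;>
      rcases memB b hb with ⟨u, h1, h2, rfl⟩ | ⟨u, h1, h2, rfl⟩ | rfl
    · rw [r_mul_r, ← Int.cast_add]
      simp only [one_def, ne_eq, r.injEq]
      exact ne0p hm2 hn2 hc ht h1 h2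
    · rw [r_mul_sr, one_def]; exact fun h => by cases h
    · rw [mul_one]
      simp only [one_def, ne_eq, r.injEq]
      exact ne0x hm2 hn2 hc ht
    · rw [sr_mul_r, one_def]; exact fun h => by cases h
    · rw [sr_mul_sr, ← Int.cast_sub]
      simp only [one_def, ne_eq, r.injEq]
      exact ne0q hm2 hn2 hc ht h1 h2
    · rw [mul_one, one_def]; exact fun h => by cases h
    · rw [sr_mul_r, one_def]; exact fun h => by cases h
    · rw [sr_mul_sr, sub_zero]
      simp only [one_def, ne_eq, r.injEq]
      exact ne0y hm2 hn2 hc h1 h2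
    · rw [mul_one, one_def]; exact fun h => by cases h
  · intro hg
    cases g with
    | r z =>
      have hz : z ≠ 0 := by
        intro h; subst h; exact hg one_def.symm
      have hzmem : z ∈ (Finset.univ \ {(0 : ZMod n)}) := by
        simp [hz]
      rw [← hcov] at hzmem
      rcases Finset.mem_union.1 hzmem with h1 | hY
      · rcases Finset.mem_union.1 h1 with h2 | hX
        · rcases Finset.mem_union.1 h2 with hP | hQ
          · obtain ⟨⟨t, u⟩, htu, he⟩ := Finset.mem_image.1 hP
            rw [Finset.mem_product, Finset.mem_range, Finset.mem_Icc] at htu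
            have : r z = r ((fx m t : ℤ) : ZMod n) * r ((fy m u : ℤ) : ZMod n) := by
              rw [r_mul_r, ← Int.cast_add, he]
            rw [this]
            exact Finset.mul_mem_mul (hAr t htu.1) (hBr u htu.2.1 htu.2.2)
          · obtain ⟨⟨t, u⟩, htu, he⟩ := Finset.mem_image.1 hQ
            rw [Finset.mem_product, Finset.mem_range, Finset.mem_Icc] at htu
            have : r z = sr ((fx m t : ℤ) : ZMod n) * sr ((fy m u : ℤ) : ZMod n) := by
              rw [sr_mul_sr, ← Int.cast_sub, he]
            rw [this]
            exact Finset.mul_mem_mul (hAsr t htu.1) (hBsr u htu.2.1 htu.2.2)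
        · obtain ⟨t, ht, he⟩ := Finset.mem_image.1 hX
          rw [Finset.mem_range] at ht
          have : r z = r ((fx m t : ℤ) : ZMod n) * 1 := by rw [mul_one, he]
          rw [this]
          exact Finset.mul_mem_mul (hAr t ht) hB1
      · obtain ⟨u, hu, he⟩ := Finset.mem_image.1 hY
        rw [Finset.mem_Icc] at hu
        have : r z = sr (0 : ZMod n) * sr ((fy m u : ℤ) : ZMod n) := by
          rw [sr_mul_sr, sub_zero, he]
        rw [this]
        exact Finset.mul_mem_mul hAs (hBsr u hu.1 hu.2)
    | sr z =>
      by_cases hz : z = 0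
      · subst hz
        have : sr (0 : ZMod n) = sr (0 : ZMod n) * 1 := by rw [mul_one]
        rw [this]
        exact Finset.mul_mem_mul hAs hB1
      · have hzmem : z ∈ (Finset.univ \ {(0 : ZMod n)}) := by
          simp [hz]
        rw [← hcov] at hzmem
        rcases Finset.mem_union.1 hzmem with h1 | hY
        · rcases Finset.mem_union.1 h1 with h2 | hX
          · rcases Finset.mem_union.1 h2 with hP | hQ
            · obtain ⟨⟨t, u⟩, htu, he⟩ := Finset.mem_image.1 hP
              rw [Finset.mem_product, Finset.mem_range, Finset.mem_Icc] at htu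
              have : sr z = sr ((fx m t : ℤ) : ZMod n) * r ((fy m u : ℤ) : ZMod n) := by
                rw [sr_mul_r, ← Int.cast_add, he]
              rw [this]
              exact Finset.mul_mem_mul (hAsr t htu.1) (hBr u htu.2.1 htu.2.2)
            · obtain ⟨⟨t, u⟩, htu, he⟩ := Finset.mem_image.1 hQ
              rw [Finset.mem_product, Finset.mem_range, Finset.mem_Icc] at htu
              have : sr z = r ((fx m t : ℤ) : ZMod n) * sr ((fy m u : ℤ) : ZMod n) := by
                rw [r_mul_sr, ← Int.cast_sub, he]
              rw [this]
              exact Finset.mul_mem_mul (hAr t htu.1) (hBsr u htu.2.1 htu.2.2)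
          · obtain ⟨t, ht, he⟩ := Finset.mem_image.1 hX
            rw [Finset.mem_range] at ht
            have : sr z = sr ((fx m t : ℤ) : ZMod n) * 1 := by rw [mul_one, he]
            rw [this]
            exact Finset.mul_mem_mul (hAsr t ht) hB1
        · obtain ⟨u, hu, he⟩ := Finset.mem_image.1 hY
          rw [Finset.mem_Icc] at hu
          have : sr z = sr (0 : ZMod n) * r ((fy m u : ℤ) : ZMod n) := by
            rw [sr_mul_r, zero_add, he]
          rw [this]
          exact Finset.mul_mem_mul hAs (hBr u hu.1 hu.2)
end

section
/- Suppose n is odd and (A,B) and (C,D) are equivalent symmetric near-factorizations of Z_{2n} with C = rA + h and D = rB − h for some integers r, h. Then gcd(r, 2n) = 1 and h ≡ 0 or n (mod 2n). -/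
open Pointwise

/-- If `(A,B)` and `(C,D)` are equivalent symmetric near-factorizations of
`Z_{2n}` (`n` odd) with `C = rA + h` and `D = rB - h`, then `gcd(r, 2n) = 1`
and `h ≡ 0` or `n (mod 2n)`. -/
theorem stmt10 (n : ℕ) [NeZero n] (hodd : Odd n)
    (A B C D : Finset (ZMod (2 * n)))
    (hNF : A.card * B.card = 2 * n - 1 ∧ A + B = Finset.univ \ {0})
    (hNF' : C.card * D.card = 2 * n - 1 ∧ C + D = Finset.univ \ {0})
    (hsymA : A = -A) (hsymB : B = -B) (hsymC : C = -C) (hsymD : D = -D)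
    (r h : ℤ)
    (hC : C = A.image (fun x => (r : ZMod (2 * n)) * x + (h : ZMod (2 * n))))
    (hD : D = B.image (fun x => (r : ZMod (2 * n)) * x - (h : ZMod (2 * n)))) :
    Int.gcd r (2 * n) = 1 ∧
      ((h : ZMod (2 * n)) = 0 ∨ (h : ZMod (2 * n)) = (n : ZMod (2 * n))) := by
  have hn := NeZero.ne n
  haveI : NeZero (2 * n) := ⟨by omega⟩
  haveI : Fact (1 < 2 * n) := ⟨by omega⟩
  obtain ⟨hcard', hCD⟩ := hNF'
  constructor
  · -- gcd part
    have h1 : (1 : ZMod (2 * n)) ∈ C + D := by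
      rw [hCD]
      simp
    obtain ⟨c, hc, d, hd, hcd1⟩ := Finset.mem_add.mp h1
    rw [hC] at hc; rw [hD] at hd
    obtain ⟨a, ha, rfl⟩ := Finset.mem_image.mp hc
    obtain ⟨b, hb, rfl⟩ := Finset.mem_image.mp hd
    have hr : (r : ZMod (2 * n)) * (a + b) = 1 := by linear_combination hcd1
    have hx : ((r * ((a + b).val : ℤ) - 1 : ℤ) : ZMod (2 * n)) = 0 := by
      push_cast
      rw [ZMod.natCast_val, ZMod.cast_id, sub_eq_zero]
      exact hr
    rw [ZMod.intCast_zmod_eq_zero_iff_dvd] at hx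
    obtain ⟨k, hk⟩ := hx
    rw [← Int.isCoprime_iff_gcd_eq_one]
    exact ⟨((a + b).val : ℤ), -k, by push_cast at hk ⊢; linarith⟩
  · -- h part
    have keyD : ∀ d ∈ D, d - 2 * (h : ZMod (2 * n)) ∈ D := by
      intro d hd
      have hnd : -d ∈ D := by rw [hsymD]; simpa using hd
      rw [hD] at hnd ⊢
      obtain ⟨b, hb, hbe⟩ := Finset.mem_image.mp hnd
      have hnb : -b ∈ B := by rw [hsymB]; simpa using hb
      exact Finset.mem_image.mpr ⟨-b, hnb, by push_cast; linear_combination -hbe⟩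
    have h2 : 2 * (h : ZMod (2 * n)) = 0 := by
      by_contra hne
      have hm : 2 * (h : ZMod (2 * n)) ∈ C + D := by
        rw [hCD]; simp [hne]
      obtain ⟨c, hc, d, hd, hsum⟩ := Finset.mem_add.mp hm
      have h0 : (0 : ZMod (2 * n)) ∈ C + D :=
        Finset.mem_add.mpr ⟨c, hc, d - 2 * (h : ZMod (2 * n)), keyD d hd,
          by linear_combination hsum⟩
      rw [hCD] at h0
      simp at h0
    -- conclude
    have hx : ((2 * h : ℤ) : ZMod (2 * n)) = 0 := by push_cast; linear_combination h2
    rw [ZMod.intCast_zmod_eq_zero_iff_dvd] at hx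
    have hnh : (n : ℤ) ∣ h := by
      obtain ⟨k, hk⟩ := hx
      exact ⟨k, by push_cast at hk; linarith⟩
    obtain ⟨k, hk⟩ := hnh
    rcases Int.even_or_odd k with ⟨j, hj⟩ | ⟨j, hj⟩
    · left
      have : (h : ZMod (2 * n)) = ((2 * n * j : ℤ) : ZMod (2 * n)) := by
        rw [hk, hj]; push_cast; ring
      rw [this, ZMod.intCast_zmod_eq_zero_iff_dvd]
      exact ⟨j, by push_cast; ring⟩
    · right
      have h3 : (h : ZMod (2 * n)) = ((2 * n * j + n : ℤ) : ZMod (2 * n)) := by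
        rw [hk, hj]; push_cast; ring
      have h4 : ((n : ℕ) : ZMod (2 * n)) = ((n : ℤ) : ZMod (2 * n)) := by push_cast; ring
      rw [h3, h4, ← sub_eq_zero, ← Int.cast_sub, ZMod.intCast_zmod_eq_zero_iff_dvd]
      exact ⟨j, by push_cast; ring⟩
end

section
/- Suppose n is odd, A ⊆ Z_n is symmetric, and C = rA + h where gcd(r,n) = 1 and h ∈ Z_n. If C is symmetric, then h is a multiple of n / gcd(|A|, n). -/
/-!
Under `x ↦ -x` a symmetric set is fixed, so its sum `s` satisfies `s = -s`; as `n` is odd this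
forces `s = 0`. Summing `C = rA + h` gives `∑ C = r ∑ A + |A| h`, so `|A| h = 0` in `ℤ/nℤ`, and
the solutions of `|A| h = 0` are exactly the multiples of `n / gcd(|A|, n)`.
-/

open Pointwise

theorem Nat.div_gcd_dvd_of_dvd_mul {m n k : ℕ} (hn : 0 < n) (h : n ∣ m * k) :
    n / Nat.gcd m n ∣ k := by
  obtain ⟨g, m', n', hg, hcop, rfl, rfl⟩ := Nat.exists_coprime' (Nat.gcd_pos_of_pos_right m hn)
  rw [Nat.gcd_mul_right, hcop, one_mul, Nat.mul_div_cancel _ hg]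
  rw [mul_comm n', mul_comm m', mul_assoc, Nat.mul_dvd_mul_iff_left hg] at h
  exact hcop.symm.dvd_of_dvd_mul_left h

theorem ZMod.exists_eq_mul_div_gcd_of_natCast_mul_eq_zero {n : ℕ} [NeZero n] {m : ℕ}
    {h : ZMod n} (H : (m : ZMod n) * h = 0) :
    ∃ t : ZMod n, h = t * ((n / Nat.gcd m n : ℕ) : ZMod n) := by
  rw [← ZMod.natCast_zmod_val h, ← Nat.cast_mul, ZMod.natCast_eq_zero_iff] at H
  obtain ⟨k, hk⟩ := Nat.div_gcd_dvd_of_dvd_mul (NeZero.pos n) H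
  exact ⟨k, by rw [← ZMod.natCast_zmod_val h, hk, Nat.cast_mul, mul_comm]⟩

theorem Finset.sum_eq_neg_sum_of_eq_neg {G : Type*} [AddCommGroup G] [DecidableEq G]
    {S : Finset G} (hS : S = -S) : ∑ x ∈ S, x = -∑ x ∈ S, x := by
  conv_lhs => rw [hS]
  rw [Finset.sum_neg_index, Finset.sum_neg_distrib]

theorem ZMod.sum_eq_zero_of_eq_neg {n : ℕ} (hn : Odd n) {S : Finset (ZMod n)} (hS : S = -S) :
    ∑ x ∈ S, x = 0 :=
  (ZMod.add_self_eq_zero_iff_eq_zero hn).mp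
    (eq_neg_iff_add_eq_zero.mp (Finset.sum_eq_neg_sum_of_eq_neg hS))

theorem Finset.sum_image_mul_add {R : Type*} [Ring R] [DecidableEq R] {r : R}
    (hr : IsLeftRegular r) (h : R) (A : Finset R) :
    ∑ x ∈ A.image (fun x => r * x + h), x = r * ∑ x ∈ A, x + A.card • h := by
  have hinj : Set.InjOn (fun x => r * x + h) A := fun a _ b _ hab => hr (add_right_cancel hab)
  rw [Finset.sum_image hinj, Finset.sum_add_distrib, Finset.mul_sum, Finset.sum_const]

/-- Suppose `n` is odd, `A ⊆ Z_n` is symmetric, and `C = rA + h` where `r` is a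
unit of `Z_n` (i.e. `gcd(r,n) = 1`) and `h ∈ Z_n`. If `C` is symmetric, then
`h` is a multiple of `n / gcd(|A|, n)`. -/
theorem stmt11 (n : ℕ) (hodd : Odd n)
    (A : Finset (ZMod n)) (hsymA : A = -A)
    (r : ZMod n) (hr : IsUnit r) (h : ZMod n)
    (C : Finset (ZMod n)) (hC : C = A.image (fun x => r * x + h))
    (hsymC : C = -C) :
    ∃ t : ZMod n, h = t * ((n / Nat.gcd A.card n : ℕ) : ZMod n) := by
  have : NeZero n := ⟨by rintro rfl; exact Nat.not_odd_zero hodd⟩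
  have hsum := Finset.sum_image_mul_add hr.isRegular.left h A
  rw [← hC, ZMod.sum_eq_zero_of_eq_neg hodd hsymC, ZMod.sum_eq_zero_of_eq_neg hodd hsymA,
    mul_zero, zero_add, nsmul_eq_mul] at hsum
  exact ZMod.exists_eq_mul_div_gcd_of_natCast_mul_eq_zero hsum.symm
end

section
/- Suppose n is odd and (A',B') is a strongly symmetric near-factorization of the dihedral group D_n. Let (A,B) be obtained from (A',B') by applying the inverse Pêcher transform, i.e., A is the set of all x ∈ Z_{2n} such that a^{x mod 2} b^{x mod n} ∈ A', and similarly for B. Then (A,B) is a symmetric near-factorization of Z_{2n}. -/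
open Pointwise

/-- The Pêcher transform sends `x ∈ Z_{2n}` to `a^{x mod 2} b^{x mod n} ∈ D_n`. -/
def pecher (n : ℕ) (x : ZMod (2 * n)) : DihedralGroup n :=
  if x.val % 2 = 0 then DihedralGroup.r (x.val : ZMod n)
  else DihedralGroup.sr (x.val : ZMod n)

/-- The inverse Pêcher transform of a subset `X'` of `D_n`: the set of all
`x ∈ Z_{2n}` with `a^{x mod 2} b^{x mod n} ∈ X'`. -/
def ipecher (n : ℕ) [NeZero n] (X' : Finset (DihedralGroup n)) :
    Finset (ZMod (2 * n)) :=
  Finset.univ.filter (fun x => pecher n x ∈ X')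

/-- A subset `X` of `D_n` is strongly symmetric if `a^i b^j ∈ X ↔ a^i b^{-j} ∈ X`. -/
def StronglySymmetric {n : ℕ} (X : Finset (DihedralGroup n)) : Prop :=
  ∀ j : ZMod n, (DihedralGroup.r j ∈ X ↔ DihedralGroup.r (-j) ∈ X) ∧
    (DihedralGroup.sr j ∈ X ↔ DihedralGroup.sr (-j) ∈ X)

section Helpers

variable (n : ℕ) [NeZero n]

private lemma castv (x : ZMod (2 * n)) :
    ((x.val : ℕ) : ZMod n) = ZMod.castHom (dvd_mul_left n 2) (ZMod n) x := by
  rw [ZMod.natCast_val, ZMod.castHom_apply]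

private lemma val_add_cast (x y : ZMod (2 * n)) :
    (((x + y).val : ℕ) : ZMod n) = (x.val : ZMod n) + (y.val : ZMod n) := by
  rw [castv, castv, castv, map_add]

private lemma val_neg_cast (x : ZMod (2 * n)) :
    (((-x).val : ℕ) : ZMod n) = -((x.val : ℕ) : ZMod n) := by
  rw [castv, castv, map_neg]

private lemma par_add (x y : ZMod (2 * n)) :
    (x + y).val % 2 = (x.val + y.val) % 2 := by
  rw [ZMod.val_add]
  exact Nat.mod_mod_of_dvd _ (dvd_mul_right 2 n)

private lemma par_neg (x : ZMod (2 * n)) : (-x).val % 2 = x.val % 2 := by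
  rw [ZMod.neg_val]
  split
  · rename_i h
    rw [h, ZMod.val_zero]
  · have h1 : x.val < 2 * n := x.val_lt
    omega

private lemma mem_ipecher {X' : Finset (DihedralGroup n)} {x : ZMod (2 * n)} :
    x ∈ ipecher n X' ↔ pecher n x ∈ X' := by
  simp [ipecher]

private lemma pecher_zero : pecher n 0 = 1 := by
  unfold pecher
  simp [ZMod.val_zero]

private lemma pecher_inj (hodd : Odd n) : Function.Injective (pecher n) := by
  intro x y h
  unfold pecher at h
  have hm : x.val % 2 = y.val % 2 ∧ ((x.val : ZMod n) = (y.val : ZMod n)) := by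
    split at h <;> split at h <;> simp_all <;> omega
  have hn : x.val ≡ y.val [MOD n] := (ZMod.natCast_eq_natCast_iff _ _ _).1 hm.2
  have h2 : x.val ≡ y.val [MOD 2] := hm.1
  have hmn : x.val ≡ y.val [MOD 2 * n] :=
    (Nat.modEq_and_modEq_iff_modEq_mul (Nat.coprime_two_left.mpr hodd)).1 ⟨h2, hn⟩
  have hx := x.val_lt
  have hy := y.val_lt
  apply ZMod.val_injective
  unfold Nat.ModEq at hmn
  rwa [Nat.mod_eq_of_lt hx, Nat.mod_eq_of_lt hy] at hmn

private lemma pecher_bij (hodd : Odd n) : Function.Bijective (pecher n) :=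
  (Fintype.bijective_iff_injective_and_card _).2
    ⟨pecher_inj n hodd, by simp [ZMod.card, DihedralGroup.card]⟩

private lemma neg_mem_ipecher {X' : Finset (DihedralGroup n)}
    (hss : StronglySymmetric X') (x : ZMod (2 * n)) :
    -x ∈ ipecher n X' ↔ x ∈ ipecher n X' := by
  rw [mem_ipecher, mem_ipecher]
  unfold pecher
  rw [par_neg, val_neg_cast]
  split
  · exact ((hss _).1).symm
  · exact ((hss _).2).symm

private lemma prod_even {x y : ZMod (2 * n)} (hy : y.val % 2 = 0) :
    pecher n (x + y) = pecher n x * pecher n y := by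
  unfold pecher
  rw [par_add, val_add_cast]
  by_cases hx : x.val % 2 = 0
  · have h : (x.val + y.val) % 2 = 0 := by omega
    simp [hx, hy, h, DihedralGroup.r_mul_r]
  · have h : ¬((x.val + y.val) % 2 = 0) := by omega
    simp [hx, hy, h, DihedralGroup.sr_mul_r]

private lemma prod_odd {x y : ZMod (2 * n)} (hy : ¬(y.val % 2 = 0)) :
    pecher n (-x + y) = pecher n x * pecher n y := by
  unfold pecher
  rw [par_add, Nat.add_mod, par_neg, ← Nat.add_mod, val_add_cast, val_neg_cast]
  by_cases hx : x.val % 2 = 0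
  · have h : ¬((x.val + y.val) % 2 = 0) := by omega
    simp only [hx, hy, h, if_true, if_false]
    rw [DihedralGroup.r_mul_sr, sub_eq_neg_add]
  · have h : (x.val + y.val) % 2 = 0 := by omega
    simp only [hx, hy, h, if_true, if_false]
    rw [DihedralGroup.sr_mul_sr, sub_eq_neg_add]

end Helpers

/-- If `(A',B')` is a strongly symmetric near-factorization of `D_n` (`n` odd),
then its image `(A,B)` under the inverse Pêcher transform is a symmetric
near-factorization of `Z_{2n}`. -/
theorem stmt13 (n : ℕ) [NeZero n] (hodd : Odd n)
    (A' B' : Finset (DihedralGroup n))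
    (hNF : A'.card * B'.card = 2 * n - 1 ∧ A' * B' = Finset.univ \ {1})
    (hssA : StronglySymmetric A') (hssB : StronglySymmetric B') :
    ((ipecher n A').card * (ipecher n B').card = 2 * n - 1 ∧
      ipecher n A' + ipecher n B' = Finset.univ \ {0}) ∧
    ipecher n A' = -(ipecher n A') ∧ ipecher n B' = -(ipecher n B') := by
  obtain ⟨hcard, hprod⟩ := hNF
  have hbij := pecher_bij n hodd
  -- cardinalities
  have himg : ∀ X' : Finset (DihedralGroup n),
      (ipecher n X').image (pecher n) = X' := by
    intro X'
    ext g
    simp only [Finset.mem_image]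
    constructor
    · rintro ⟨x, hx, rfl⟩
      exact (mem_ipecher n).1 hx
    · intro hg
      obtain ⟨x, rfl⟩ := hbij.2 g
      exact ⟨x, (mem_ipecher n).2 hg, rfl⟩
  have hcA : (ipecher n A').card = A'.card := by
    rw [← Finset.card_image_of_injective (ipecher n A') hbij.1, himg]
  have hcB : (ipecher n B').card = B'.card := by
    rw [← Finset.card_image_of_injective (ipecher n B') hbij.1, himg]
  -- symmetry
  have symm : ∀ X' : Finset (DihedralGroup n), StronglySymmetric X' →
      ipecher n X' = -(ipecher n X') := by
    intro X' hss
    ext x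
    rw [Finset.mem_neg]
    constructor
    · intro hx
      exact ⟨-x, (neg_mem_ipecher n hss x).mpr hx, neg_neg x⟩
    · rintro ⟨y, hy, rfl⟩
      exact (neg_mem_ipecher n hss y).mpr hy
  -- the sumset
  have hsum : ipecher n A' + ipecher n B' = Finset.univ \ {0} := by
    ext z
    rw [Finset.mem_add]
    simp only [Finset.mem_sdiff, Finset.mem_univ, Finset.mem_singleton, true_and]
    constructor
    · rintro ⟨x, hx, y, hy, rfl⟩
      intro h0
      have hm : pecher n (x + y) ∈ A' * B' := by
        by_cases hy2 : y.val % 2 = 0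
        · rw [prod_even n hy2]
          exact Finset.mul_mem_mul ((mem_ipecher n).1 hx) ((mem_ipecher n).1 hy)
        · have hrw : pecher n (x + y) = pecher n (-(-x) + y) := by rw [neg_neg]
          rw [hrw, prod_odd n hy2]
          exact Finset.mul_mem_mul
            ((mem_ipecher n).1 ((neg_mem_ipecher n hssA x).mpr hx))
            ((mem_ipecher n).1 hy)
      rw [hprod, h0, pecher_zero] at hm
      simp at hm
    · intro hz
      have h1 : pecher n z ∈ A' * B' := by
        rw [hprod]
        simp only [Finset.mem_sdiff, Finset.mem_univ, Finset.mem_singleton, true_and]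
        intro h
        exact hz (hbij.1 (h.trans (pecher_zero n).symm))
      rw [Finset.mem_mul] at h1
      obtain ⟨g, hg, h, hh, hgh⟩ := h1
      obtain ⟨x, rfl⟩ := hbij.2 g
      obtain ⟨y, rfl⟩ := hbij.2 h
      by_cases hy2 : y.val % 2 = 0
      · exact ⟨x, (mem_ipecher n).2 hg, y, (mem_ipecher n).2 hh,
          hbij.1 ((prod_even n hy2).trans hgh)⟩
      · exact ⟨-x, (neg_mem_ipecher n hssA x).mpr ((mem_ipecher n).2 hg),
          y, (mem_ipecher n).2 hh, hbij.1 ((prod_odd n hy2).trans hgh)⟩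
  exact ⟨⟨by rw [hcA, hcB, hcard], hsum⟩, symm A' hssA, symm B' hssB⟩
end
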